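/- arXiv:1801.04501 — 7 statements merged into one kernel-verified Lean document; each statement's English description precedes it below -/
import Mathlib

section
/- For every K > 0, u > 0 and λ ≥ 0, one has ∫_0^λ K(1 − e^{−zu})/(Kz + z²) dz = ∫_0^∞ ((1 − e^{−λv})/v) · e^{−Kv} (e^{K(v∧u)} − 1) dv, where v∧u denotes the minimum of v and u. -/
/-!
The left integrand is the Laplace transform `∫₀^∞ e^{-zv} f(v) dv` of the kernel
`f(v) = e^{-Kv}(e^{K(v∧u)} - 1)`, which equals `1 - e^{-Kv}` on `(0, u]` and `(e^{Ku} - 1)e^{-Kv}`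
on `(u, ∞)`, so the transform is computed piece by piece. Since `f` is integrable and
`|e^{-zv}| ≤ 1` for `z, v ≥ 0`, Fubini lets us integrate in `z` first, and
`∫₀^λ e^{-zv} dz = (1 - e^{-λv})/v`.
-/

open MeasureTheory Set Real

theorem integral_exp_neg_mul_Ioi {b : ℝ} (hb : 0 < b) (c : ℝ) :
    ∫ v in Ioi c, exp (-(b * v)) = exp (-(b * c)) / b := by
  simpa [neg_mul, neg_div_neg_eq] using integral_exp_mul_Ioi (neg_lt_zero.2 hb) c

theorem integral_exp_neg_mul_zero_left {b : ℝ} (hb : b ≠ 0) (c : ℝ) :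
    ∫ x in (0:ℝ)..c, exp (-(x * b)) = (1 - exp (-(c * b))) / b := by
  rw [intervalIntegral.integral_comp_mul_right (fun w => exp (-w)) hb, zero_mul,
    intervalIntegral.integral_comp_neg, integral_exp, neg_zero, exp_zero, smul_eq_mul,
    inv_mul_eq_div]

theorem integral_Ioc_integral_Ioi_exp_neg_mul {f : ℝ → ℝ} (hf : IntegrableOn f (Ioi 0))
    {a : ℝ} (ha : 0 ≤ a) :
    ∫ z in Ioc 0 a, ∫ v in Ioi 0, exp (-(z * v)) * f v =
      ∫ v in Ioi 0, (1 - exp (-(a * v))) / v * f v := by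
  have hprod : Integrable (Function.uncurry fun z v => exp (-(z * v)) * f v)
      ((volume.restrict (Ioc 0 a)).prod (volume.restrict (Ioi 0))) := by
    refine (hf.comp_snd _).bdd_mul (c := 1) (by fun_prop) ?_
    rw [Measure.prod_restrict]
    filter_upwards [ae_restrict_mem (measurableSet_Ioc.prod measurableSet_Ioi)] with p ⟨hz, hv⟩
    rw [norm_of_nonneg (exp_nonneg _), exp_le_one_iff, neg_nonpos]
    exact mul_nonneg hz.1.le (le_of_lt hv)
  rw [integral_integral_swap hprod]
  refine setIntegral_congr_fun measurableSet_Ioi fun v (hv : 0 < v) => ?_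
  rw [integral_mul_const, ← intervalIntegral.integral_of_le ha,
    integral_exp_neg_mul_zero_left hv.ne']

noncomputable def expMinKernel (K u v : ℝ) : ℝ :=
  exp (-(K * v)) * (exp (K * min v u) - 1)

namespace expMinKernel

variable {K u v : ℝ}

@[fun_prop]
theorem continuous (K u : ℝ) : Continuous (expMinKernel K u) := by
  unfold expMinKernel
  fun_prop

theorem eq_of_le (h : v ≤ u) : expMinKernel K u v = 1 - exp (-(K * v)) := by
  rw [expMinKernel, min_eq_left h, mul_sub, ← exp_add, neg_add_cancel, exp_zero, mul_one]

theorem eq_of_ge (h : u ≤ v) : expMinKernel K u v = (exp (K * u) - 1) * exp (-(K * v)) := by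
  rw [expMinKernel, min_eq_right h, mul_comm]

theorem integrableOn_Ioi_zero (hK : 0 < K) (u : ℝ) : IntegrableOn (expMinKernel K u) (Ioi 0) := by
  have hleft : IntegrableOn (expMinKernel K u) (Ioc 0 u) :=
    ((continuous K u).integrableOn_Icc).mono_set Ioc_subset_Icc_self
  have hright : IntegrableOn (expMinKernel K u) (Ioi u) := by
    refine IntegrableOn.congr_fun (f := fun v => (exp (K * u) - 1) * exp (-(K * v))) ?_
      (fun v hv => (eq_of_ge (le_of_lt hv)).symm) measurableSet_Ioi
    simp_rw [← neg_mul]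
    exact (exp_neg_integrableOn_Ioi u hK).const_mul _
  exact (hleft.union hright).mono_set fun v hv => by
    rcases le_or_gt v u with h | h
    exacts [Or.inl ⟨hv, h⟩, Or.inr h]

theorem setIntegral_Ioc_exp_neg_mul (hu : 0 ≤ u) {z : ℝ} (hz : z ≠ 0) (hzK : z + K ≠ 0) :
    ∫ v in Ioc 0 u, exp (-(z * v)) * expMinKernel K u v
      = (1 - exp (-(u * z))) / z - (1 - exp (-(u * (z + K)))) / (z + K) := by
  rw [setIntegral_congr_fun measurableSet_Ioc
    (g := fun v => exp (-(v * z)) - exp (-(v * (z + K)))) fun v hv => ?_]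
  · rw [← intervalIntegral.integral_of_le hu, intervalIntegral.integral_sub
      (Continuous.intervalIntegrable (by fun_prop) _ _)
      (Continuous.intervalIntegrable (by fun_prop) _ _),
      integral_exp_neg_mul_zero_left hz, integral_exp_neg_mul_zero_left hzK]
  · rw [eq_of_le hv.2, mul_sub, mul_one, ← exp_add]
    ring_nf

theorem setIntegral_Ioi_exp_neg_mul {z : ℝ} (hzK : 0 < z + K) :
    ∫ v in Ioi u, exp (-(z * v)) * expMinKernel K u v
      = (exp (K * u) - 1) * (exp (-((z + K) * u)) / (z + K)) := by
  rw [setIntegral_congr_fun measurableSet_Ioi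
    (g := fun v => (exp (K * u) - 1) * exp (-((z + K) * v))) fun v hv => ?_]
  · rw [integral_const_mul, integral_exp_neg_mul_Ioi hzK]
  · rw [eq_of_ge (le_of_lt hv), mul_left_comm, ← exp_add]
    ring_nf

theorem setIntegral_Ioi_zero_exp_neg_mul (hK : 0 < K) (hu : 0 ≤ u) {z : ℝ} (hz : 0 < z) :
    ∫ v in Ioi 0, exp (-(z * v)) * expMinKernel K u v
      = K * (1 - exp (-(z * u))) / (K * z + z ^ 2) := by
  have hzK : 0 < z + K := by linarith
  have hint : IntegrableOn (fun v => exp (-(z * v)) * expMinKernel K u v) (Ioi 0) := by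
    refine (integrableOn_Ioi_zero hK u).bdd_mul (c := 1) (by fun_prop) ?_
    filter_upwards [ae_restrict_mem measurableSet_Ioi] with v (hv : 0 < v)
    rw [norm_of_nonneg (exp_nonneg _), exp_le_one_iff, neg_nonpos]
    exact mul_nonneg hz.le hv.le
  rw [← Ioc_union_Ioi_eq_Ioi hu, setIntegral_union Ioc_disjoint_Ioi_same measurableSet_Ioi
    (hint.mono_set Ioc_subset_Ioi_self) (hint.mono_set (Ioi_subset_Ioi hu)),
    setIntegral_Ioc_exp_neg_mul hu hz.ne' hzK.ne', setIntegral_Ioi_exp_neg_mul hzK]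
  have h₁ : exp (-(u * z)) = exp (-(z * u)) := by ring_nf
  have h₂ : exp (-(u * (z + K))) = exp (-(z * u)) * exp (-(K * u)) := by rw [← exp_add]; ring_nf
  have h₃ : exp (-((z + K) * u)) = exp (-(z * u)) * exp (-(K * u)) := by rw [← exp_add]; ring_nf
  have hinv : exp (K * u) * exp (-(K * u)) = 1 := by rw [← exp_add, add_neg_cancel, exp_zero]
  rw [h₁, h₂, h₃]
  generalize exp (-(z * u)) = E at *
  generalize exp (-(K * u)) = F at *
  field_simp
  linear_combination E * z * (z + K) * hinv

end expMinKernel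

/-- For every K > 0, u > 0 and λ ≥ 0,
∫_0^λ K(1 − e^{−zu})/(Kz + z²) dz = ∫_0^∞ ((1 − e^{−λv})/v) e^{−Kv}(e^{K(v∧u)} − 1) dv. -/
theorem stmt_3 (K u lam : ℝ) (hK : 0 < K) (hu : 0 < u) (hlam : 0 ≤ lam) :
    (∫ z in (0:ℝ)..lam, K * (1 - Real.exp (-(z * u))) / (K * z + z ^ 2)) =
      ∫ v in Ioi (0:ℝ),
        ((1 - Real.exp (-(lam * v))) / v) * (Real.exp (-(K * v)) * (Real.exp (K * min v u) - 1)) := by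
  calc (∫ z in (0:ℝ)..lam, K * (1 - exp (-(z * u))) / (K * z + z ^ 2))
      = ∫ z in Ioc 0 lam, ∫ v in Ioi 0, exp (-(z * v)) * expMinKernel K u v := by
        rw [intervalIntegral.integral_of_le hlam]
        exact setIntegral_congr_fun measurableSet_Ioc fun z hz =>
          (expMinKernel.setIntegral_Ioi_zero_exp_neg_mul hK hu.le hz.1).symm
    _ = ∫ v in Ioi 0, (1 - exp (-(lam * v))) / v * expMinKernel K u v :=
        integral_Ioc_integral_Ioi_exp_neg_mul (expMinKernel.integrableOn_Ioi_zero hK u) hlam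
end

section
/- If g : [0,∞) → [0,∞) is continuous, non-decreasing, g(0) = 0, and there exists z₀ > 0 with g(z₀) > 0 and ∫_{z₀}^∞ dy/g(y) < ∞, then g(y)/y → ∞ as y → ∞. -/
open MeasureTheory Set

/-- If g : [0,∞) → [0,∞) is continuous, non-decreasing, g(0) = 0, and there exists z₀ > 0
with g(z₀) > 0 and ∫_{z₀}^∞ dy/g(y) < ∞, then g(y)/y → ∞ as y → ∞. -/
theorem stmt_6 (g : ℝ → ℝ)
    (hg_cont : ContinuousOn g (Ici 0))
    (hg_mono : MonotoneOn g (Ici 0))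
    (hg_nonneg : ∀ x ∈ Ici (0:ℝ), 0 ≤ g x)
    (hg0 : g 0 = 0)
    (z₀ : ℝ) (hz₀ : 0 < z₀) (hgz₀ : 0 < g z₀)
    (hint : IntegrableOn (fun y => 1 / g y) (Ioi z₀) volume) :
    Filter.Tendsto (fun y => g y / y) Filter.atTop Filter.atTop := by
  have gpos : ∀ z, z₀ ≤ z → 0 < g z := by
    intro z hz
    exact lt_of_lt_of_le hgz₀ (hg_mono hz₀.le (le_trans hz₀.le hz) hz)
  have hII : ∀ a b : ℝ, z₀ ≤ a → a ≤ b →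
      IntervalIntegrable (fun y => 1 / g y) volume a b := by
    intro a b ha hab
    rw [intervalIntegrable_iff_integrableOn_Ioc_of_le hab]
    exact hint.mono_set (fun x hx => lt_of_le_of_lt ha hx.1)
  have h2t : Filter.Tendsto (fun y : ℝ => 2 * y) Filter.atTop Filter.atTop :=
    Filter.Tendsto.const_mul_atTop (by norm_num) Filter.tendsto_id
  have h1 := intervalIntegral_tendsto_integral_Ioi z₀ hint Filter.tendsto_id
  have h2 := intervalIntegral_tendsto_integral_Ioi z₀ hint h2t
  have hF : Filter.Tendsto (fun y => ∫ z in y..(2*y), 1 / g z) Filter.atTop (nhds 0) := by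
    have h3 := h2.sub h1
    rw [sub_self] at h3
    refine h3.congr' ?_
    filter_upwards [Filter.eventually_ge_atTop z₀] with y hy
    have hy2 : y ≤ 2 * y := by nlinarith [lt_of_lt_of_le hz₀ hy]
    exact intervalIntegral.integral_interval_sub_left (hII z₀ (2*y) le_rfl (hy.trans hy2))
      (hII z₀ y le_rfl hy)
  rw [Filter.tendsto_atTop]
  intro M
  set M' := max M 1 with hM'def
  have hM' : 0 < M' := lt_of_lt_of_le one_pos (le_max_right _ _)
  have hsmall : ∀ᶠ y in Filter.atTop, (∫ z in y..(2*y), 1 / g z) < 1/(2*M') := by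
    refine hF.eventually_lt_const ?_
    positivity
  obtain ⟨y₁, hy₁⟩ := (hsmall.and (Filter.eventually_ge_atTop (z₀ + 1))).exists_forall_of_atTop
  rw [Filter.eventually_atTop]
  refine ⟨2 * y₁, fun z hz => ?_⟩
  set y := z / 2 with hy_def
  have hyy₁ : y₁ ≤ y := by simp only [hy_def]; linarith
  obtain ⟨hFy, hyz₀⟩ := hy₁ y hyy₁
  have hyz : 2 * y = z := by ring
  have hy0 : 0 < y := by linarith
  have hyz₀' : z₀ ≤ y := by linarith
  have hg2y : 0 < g (2 * y) := gpos _ (by linarith)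
  -- key bound: y / g(2y) ≤ ∫_y^{2y} 1/g
  have key : y * (1 / g (2 * y)) ≤ ∫ z in y..(2*y), 1 / g z := by
    have hmono := intervalIntegral.integral_mono_on (μ := volume)
      (f := fun _ => 1 / g (2 * y)) (g := fun z => 1 / g z)
      (by linarith : y ≤ 2 * y) intervalIntegrable_const
      (hII y (2*y) hyz₀' (by linarith))
      (fun x hx => by
        have hx1 : y ≤ x := hx.1
        have hgx : 0 < g x := gpos x (by linarith)
        exact one_div_le_one_div_of_le hgx
          (hg_mono (by linarith : (0:ℝ) ≤ x) (by linarith : (0:ℝ) ≤ 2*y) hx.2))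
    rw [intervalIntegral.integral_const] at hmono
    calc y * (1 / g (2 * y)) = (2 * y - y) • (1 / g (2 * y)) := by
          rw [smul_eq_mul]; ring
      _ ≤ _ := hmono
  have hlt : y * (1 / g (2 * y)) < 1 / (2 * M') := lt_of_le_of_lt key hFy
  -- deduce 2 * M' * y < g (2 * y)
  have h2My : 2 * M' * y < g (2 * y) := by
    rw [mul_one_div, div_lt_div_iff₀ hg2y (by positivity : (0:ℝ) < 2 * M')] at hlt
    nlinarith
  have : M' ≤ g z / z := by
    rw [le_div_iff₀ (by linarith : (0:ℝ) < z), ← hyz]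
    nlinarith
  exact le_trans (le_max_left _ _) this
end

section
/- The integral ∫_1^∞ (1/ω(λ)) exp{ ∫_1^λ φ(z)/ω(z) dz } dλ is infinite if and only if 2δ ≥ σ². -/
/-!
From below, `δz / ω(z) ≥ (2δ/σ²)/z - O(1/z²)`. From above, the jump part
`∫ (1 - e^{-zu}) μ(du)` is `o(z)` by dominated convergence, so `φ(z)/ω(z) ≤ p/z + O(1/z²)` for
every `p > 2δ/σ²`. Integrating, `exp ∫_1^λ φ/ω` lies between `λ^{2δ/σ²}` and `λ^p` up to
constants, while `ω(λ) ≍ λ²`; the outer integral is therefore compared with `∫_1^∞ λ^{q-2} dλ`,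
which diverges exactly when `q ≥ 1`.
-/

open MeasureTheory Set Filter Topology

lemma one_sub_exp_neg_nonneg {x : ℝ} (hx : 0 ≤ x) : 0 ≤ 1 - Real.exp (-x) := by
  linarith [Real.exp_le_one_iff.mpr (neg_nonpos.mpr hx)]

lemma one_sub_exp_neg_le_one (x : ℝ) : 1 - Real.exp (-x) ≤ 1 := by
  linarith [Real.exp_pos (-x)]

lemma one_sub_exp_neg_le_self (x : ℝ) : 1 - Real.exp (-x) ≤ x := by
  linarith [Real.add_one_le_exp (-x)]

lemma one_sub_exp_neg_mul_le {z u : ℝ} (hz : 0 ≤ z) (hu : 0 ≤ u) :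
    1 - Real.exp (-(z * u)) ≤ (1 + z) * min 1 u := by
  rcases le_total 1 u with hu1 | hu1
  · rw [min_eq_left hu1]
    linarith [one_sub_exp_neg_le_one (z * u)]
  · rw [min_eq_right hu1]
    linarith [one_sub_exp_neg_le_self (z * u)]

lemma one_sub_exp_neg_mul_div_le {z u : ℝ} (hz : 1 ≤ z) :
    (1 - Real.exp (-(z * u))) / z ≤ min 1 u := by
  rw [div_le_iff₀ (by linarith)]
  rcases le_total 1 u with hu | hu
  · rw [min_eq_left hu]
    linarith [one_sub_exp_neg_le_one (z * u)]
  · rw [min_eq_right hu]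
    linarith [one_sub_exp_neg_le_self (z * u)]

noncomputable def jumpExponent (μ : Measure ℝ) (z : ℝ) : ℝ :=
  ∫ u in Ioi (0 : ℝ), (1 - Real.exp (-(z * u))) ∂μ

section jumpExponent

variable {μ : Measure ℝ}

lemma integrableOn_min_one_of_lintegral_lt_top
    (h : ∫⁻ u in Ioi (0 : ℝ), ENNReal.ofReal (min 1 u) ∂μ < ⊤) :
    IntegrableOn (fun u : ℝ => min 1 u) (Ioi 0) μ := by
  refine (lintegral_ofReal_ne_top_iff_integrable
    (measurable_const.min measurable_id).aestronglyMeasurable ?_).mp h.ne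
  filter_upwards [ae_restrict_mem measurableSet_Ioi] with u hu
  exact le_min zero_le_one (le_of_lt hu)

lemma continuous_one_sub_exp_neg_mul (z : ℝ) :
    Continuous fun u : ℝ => 1 - Real.exp (-(z * u)) := by
  fun_prop

lemma integrableOn_one_sub_exp_neg_mul (hμ : IntegrableOn (fun u : ℝ => min 1 u) (Ioi 0) μ)
    {z : ℝ} (hz : 0 ≤ z) : IntegrableOn (fun u => 1 - Real.exp (-(z * u))) (Ioi 0) μ := by
  refine (hμ.const_mul (1 + z)).mono' (continuous_one_sub_exp_neg_mul z).aestronglyMeasurable ?_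
  filter_upwards [ae_restrict_mem measurableSet_Ioi] with u hu
  rw [Real.norm_eq_abs, abs_of_nonneg (one_sub_exp_neg_nonneg (mul_nonneg hz (le_of_lt hu)))]
  exact one_sub_exp_neg_mul_le hz (le_of_lt hu)

lemma jumpExponent_nonneg {z : ℝ} (hz : 0 ≤ z) : 0 ≤ jumpExponent μ z :=
  setIntegral_nonneg measurableSet_Ioi fun _ hu =>
    one_sub_exp_neg_nonneg (mul_nonneg hz (le_of_lt hu))

lemma jumpExponent_le (hμ : IntegrableOn (fun u : ℝ => min 1 u) (Ioi 0) μ) {z : ℝ}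
    (hz : 0 ≤ z) : jumpExponent μ z ≤ (1 + z) * ∫ u in Ioi (0 : ℝ), min 1 u ∂μ := by
  rw [← integral_const_mul]
  exact setIntegral_mono_on (integrableOn_one_sub_exp_neg_mul hμ hz) (hμ.const_mul _)
    measurableSet_Ioi fun u hu => one_sub_exp_neg_mul_le hz (le_of_lt hu)

lemma jumpExponent_monotoneOn (hμ : IntegrableOn (fun u : ℝ => min 1 u) (Ioi 0) μ) :
    MonotoneOn (jumpExponent μ) (Ici 0) := by
  intro z₁ hz₁ z₂ hz₂ h
  refine setIntegral_mono_on (integrableOn_one_sub_exp_neg_mul hμ hz₁)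
    (integrableOn_one_sub_exp_neg_mul hμ hz₂) measurableSet_Ioi fun u hu => ?_
  have : z₁ * u ≤ z₂ * u := mul_le_mul_of_nonneg_right h (le_of_lt hu)
  linarith [Real.exp_le_exp.mpr (neg_le_neg this)]

lemma tendsto_jumpExponent_div_atTop (hμ : IntegrableOn (fun u : ℝ => min 1 u) (Ioi 0) μ) :
    Tendsto (fun z => jumpExponent μ z / z) atTop (𝓝 0) := by
  have hlim : Tendsto (fun z => ∫ u in Ioi (0 : ℝ), (1 - Real.exp (-(z * u))) / z ∂μ) atTop
      (𝓝 (∫ _ in Ioi (0 : ℝ), (0 : ℝ) ∂μ)) := by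
    refine tendsto_integral_filter_of_dominated_convergence (fun u => min 1 u)
      (Eventually.of_forall fun z =>
        ((continuous_one_sub_exp_neg_mul z).div_const z).aestronglyMeasurable) ?_ hμ ?_
    · filter_upwards [eventually_ge_atTop 1] with z hz
      filter_upwards [ae_restrict_mem measurableSet_Ioi] with u hu
      rw [Real.norm_eq_abs, abs_of_nonneg (div_nonneg
        (one_sub_exp_neg_nonneg (by nlinarith [mem_Ioi.mp hu])) (by linarith))]
      exact one_sub_exp_neg_mul_div_le hz
    · filter_upwards [ae_restrict_mem measurableSet_Ioi] with u hu
      refine tendsto_of_tendsto_of_tendsto_of_le_of_le' tendsto_const_nhds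
        tendsto_inv_atTop_zero ?_ ?_ <;> filter_upwards [eventually_gt_atTop 0] with z hz
      · exact div_nonneg (one_sub_exp_neg_nonneg (mul_nonneg hz.le (le_of_lt hu))) hz.le
      · rw [div_eq_mul_inv]
        exact mul_le_of_le_one_left (inv_nonneg.mpr hz.le) (one_sub_exp_neg_le_one _)
  rw [integral_zero] at hlim
  exact hlim.congr fun z => integral_div z _

lemma exists_jumpExponent_le_mul_add (hμ : IntegrableOn (fun u : ℝ => min 1 u) (Ioi 0) μ)
    {ε : ℝ} (hε : 0 < ε) : ∃ C, 0 ≤ C ∧ ∀ z, 0 ≤ z → jumpExponent μ z ≤ ε * z + C := by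
  obtain ⟨Z, hZ⟩ := eventually_atTop.mp
    ((tendsto_jumpExponent_div_atTop hμ).eventually (gt_mem_nhds hε))
  set m := ∫ u in Ioi (0 : ℝ), min 1 u ∂μ
  have hm : 0 ≤ m :=
    setIntegral_nonneg measurableSet_Ioi fun _ hu => le_min zero_le_one (le_of_lt hu)
  refine ⟨(1 + max Z 1) * m, by positivity, fun z hz => ?_⟩
  rcases le_total z (max Z 1) with hzZ | hzZ
  · -- below the threshold, the linear bound `(1 + z) m` suffices
    have := jumpExponent_le hμ hz
    nlinarith
  · have hz0 : 0 < z := lt_of_lt_of_le one_pos (le_trans (le_max_right _ _) hzZ)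
    have := (div_lt_iff₀ hz0).mp (hZ z (le_trans (le_max_left _ _) hzZ))
    nlinarith [mul_nonneg (by linarith [le_max_right Z 1] : (0:ℝ) ≤ 1 + max Z 1) hm]

end jumpExponent

lemma integral_inv_add_inv_sq (a b : ℝ) {t : ℝ} (ht : 1 ≤ t) :
    ∫ z in (1 : ℝ)..t, (a * z⁻¹ + b * (z ^ 2)⁻¹) = a * Real.log t + b * (1 - t⁻¹) := by
  have h0 : (0 : ℝ) ∉ uIcc 1 t := by
    rw [uIcc_of_le ht]; exact fun h => absurd h.1 (by norm_num)
  have hinv : IntervalIntegrable (fun z : ℝ => z⁻¹) volume 1 t :=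
    intervalIntegral.intervalIntegrable_inv (fun z hz => ne_of_mem_of_not_mem hz h0)
      continuousOn_id
  have hsq : ∀ z : ℝ, (z ^ 2)⁻¹ = z ^ (-2 : ℤ) := fun z => by simp [zpow_neg]
  simp only [hsq]
  rw [intervalIntegral.integral_add (hinv.const_mul a)
      ((intervalIntegral.intervalIntegrable_zpow (Or.inr h0)).const_mul b),
    intervalIntegral.integral_const_mul, intervalIntegral.integral_const_mul, integral_inv h0,
    integral_zpow (Or.inr ⟨by norm_num, h0⟩)]
  norm_num
  exact Or.inl (by ring)

lemma integral_le_mul_log_add {g : ℝ → ℝ} {a b t : ℝ} (ht : 1 ≤ t) (hb : 0 ≤ b)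
    (hg : IntervalIntegrable g volume 1 t)
    (hle : ∀ z ∈ Icc 1 t, g z ≤ a * z⁻¹ + b * (z ^ 2)⁻¹) :
    ∫ z in (1 : ℝ)..t, g z ≤ a * Real.log t + b := by
  have hint : IntervalIntegrable (fun z : ℝ => a * z⁻¹ + b * (z ^ 2)⁻¹) volume 1 t := by
    refine ContinuousOn.intervalIntegrable fun z hz => ?_
    have : z ≠ 0 := by rw [uIcc_of_le ht] at hz; linarith [hz.1]
    fun_prop (disch := simp [this])
  calc ∫ z in (1 : ℝ)..t, g z ≤ ∫ z in (1 : ℝ)..t, (a * z⁻¹ + b * (z ^ 2)⁻¹) :=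
        intervalIntegral.integral_mono_on ht hg hint hle
    _ = a * Real.log t + b * (1 - t⁻¹) := integral_inv_add_inv_sq a b ht
    _ ≤ a * Real.log t + b := by nlinarith [inv_nonneg.mpr (zero_le_one.trans ht)]

lemma mul_log_sub_le_integral {g : ℝ → ℝ} {a b t : ℝ} (ht : 1 ≤ t) (hb : 0 ≤ b)
    (hg : IntervalIntegrable g volume 1 t)
    (hle : ∀ z ∈ Icc 1 t, a * z⁻¹ - b * (z ^ 2)⁻¹ ≤ g z) :
    a * Real.log t - b ≤ ∫ z in (1 : ℝ)..t, g z := by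
  have := integral_le_mul_log_add (g := fun z => -g z) (a := -a) ht hb hg.neg
    fun z hz => by linarith [hle z hz]
  rw [intervalIntegral.integral_neg] at this
  linarith

lemma lintegral_ofReal_const_mul_rpow_Ioi_one_eq_top_iff {C r : ℝ} (hC : 0 < C) :
    ∫⁻ t in Ioi (1 : ℝ), ENNReal.ofReal (C * t ^ r) = ⊤ ↔ -1 ≤ r := by
  rw [← not_lt, ← integrableOn_Ioi_rpow_iff zero_lt_one, IntegrableOn,
    ← integrable_const_mul_iff (isUnit_iff_ne_zero.mpr hC.ne'), ← not_ne_iff,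
    lintegral_ofReal_ne_top_iff_integrable]
  · exact (measurable_const.mul (measurable_id.pow_const r)).aestronglyMeasurable
  · filter_upwards [ae_restrict_mem measurableSet_Ioi] with t ht
    exact mul_nonneg hC.le (Real.rpow_nonneg (zero_le_one.trans (le_of_lt ht)) r)

lemma lintegral_eq_top_of_mul_log_sub_le {w J : ℝ → ℝ} {A p b : ℝ} (hA : 0 < A) (hp : 1 ≤ p)
    (hw_pos : ∀ t, 1 < t → 0 < w t) (hw : ∀ t, 1 < t → w t ≤ A * t ^ 2)
    (hJ : ∀ t, 1 < t → p * Real.log t - b ≤ J t) :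
    ∫⁻ t in Ioi (1 : ℝ), ENNReal.ofReal (1 / w t * Real.exp (J t)) = ⊤ := by
  refine eq_top_mono (setLIntegral_mono' measurableSet_Ioi fun t ht => ENNReal.ofReal_le_ofReal ?_)
    ((lintegral_ofReal_const_mul_rpow_Ioi_one_eq_top_iff
      (by positivity : 0 < 1 / (A * Real.exp b))).mpr (by linarith : -1 ≤ p - 2))
  have ht0 : 0 < t := zero_lt_one.trans ht
  calc 1 / (A * Real.exp b) * t ^ (p - 2) = 1 / (A * t ^ 2) * Real.exp (p * Real.log t - b) := by
        rw [Real.rpow_sub ht0, Real.rpow_two, Real.exp_sub, mul_comm p, Real.exp_mul,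
          Real.exp_log ht0]
        field_simp
    _ ≤ 1 / w t * Real.exp (J t) :=
        mul_le_mul (one_div_le_one_div_of_le (hw_pos t ht) (hw t ht))
          (Real.exp_le_exp.mpr (hJ t ht)) (Real.exp_pos _).le (by simpa using (hw_pos t ht).le)

lemma lintegral_lt_top_of_le_mul_log_add {w J : ℝ → ℝ} {B p b : ℝ} (hB : 0 < B) (hp : p < 1)
    (hw : ∀ t, 1 < t → B * t ^ 2 ≤ w t) (hJ : ∀ t, 1 < t → J t ≤ p * Real.log t + b) :
    ∫⁻ t in Ioi (1 : ℝ), ENNReal.ofReal (1 / w t * Real.exp (J t)) < ⊤ := by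
  refine lt_of_le_of_lt (setLIntegral_mono' measurableSet_Ioi fun t ht =>
    ENNReal.ofReal_le_ofReal ?_) (lt_top_iff_ne_top.mpr
      (mt (lintegral_ofReal_const_mul_rpow_Ioi_one_eq_top_iff
        (by positivity : 0 < Real.exp b / B)).mp (by linarith : ¬ -1 ≤ p - 2)))
  have ht0 : 0 < t := zero_lt_one.trans ht
  calc 1 / w t * Real.exp (J t) ≤ 1 / (B * t ^ 2) * Real.exp (p * Real.log t + b) :=
        mul_le_mul (one_div_le_one_div_of_le (by positivity) (hw t ht))
          (Real.exp_le_exp.mpr (hJ t ht)) (Real.exp_pos _).le (by positivity)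
    _ = Real.exp b / B * t ^ (p - 2) := by
        rw [Real.rpow_sub ht0, Real.rpow_two, Real.exp_add, mul_comm p, Real.exp_mul,
          Real.exp_log ht0]
        field_simp

lemma MonotoneOn.intervalIntegrable_div {f g : ℝ → ℝ} {a b : ℝ} (hf : MonotoneOn f (uIcc a b))
    (hg : ContinuousOn g (uIcc a b)) (hg0 : ∀ x ∈ uIcc a b, g x ≠ 0) :
    IntervalIntegrable (fun x => f x / g x) volume a b := by
  simpa only [div_eq_mul_inv, Pi.inv_apply] using
    hf.intervalIntegrable.mul_continuousOn (hg.inv₀ hg0)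

lemma mul_inv_sub_le_div_quadratic {δ c σ z : ℝ} (hδ : 0 ≤ δ) (hc : 0 ≤ c) (hσ : σ ≠ 0)
    (hz : 0 < z) :
    2 * δ / σ ^ 2 * z⁻¹ - 4 * δ * c / σ ^ 4 * (z ^ 2)⁻¹ ≤ δ * z / (c * z + σ ^ 2 * z ^ 2 / 2) := by
  have hω : 0 < c * z + σ ^ 2 * z ^ 2 / 2 := by positivity
  have key : δ * z / (c * z + σ ^ 2 * z ^ 2 / 2) -
      (2 * δ / σ ^ 2 * z⁻¹ - 4 * δ * c / σ ^ 4 * (z ^ 2)⁻¹) =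
      4 * δ * c ^ 2 / (σ ^ 4 * z * (c * z + σ ^ 2 * z ^ 2 / 2)) := by
    field_simp
    ring
  have : 0 ≤ 4 * δ * c ^ 2 / (σ ^ 4 * z * (c * z + σ ^ 2 * z ^ 2 / 2)) := by positivity
  linarith

lemma div_quadratic_le {A B c σ z : ℝ} (hc : 0 ≤ c) (hσ : σ ≠ 0) (hz : 0 < z)
    (h : 0 ≤ A * z + B) :
    (A * z + B) / (c * z + σ ^ 2 * z ^ 2 / 2) ≤ 2 * A / σ ^ 2 * z⁻¹ + 2 * B / σ ^ 2 * (z ^ 2)⁻¹ :=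
  calc (A * z + B) / (c * z + σ ^ 2 * z ^ 2 / 2) ≤ (A * z + B) / (σ ^ 2 * z ^ 2 / 2) :=
        div_le_div_of_nonneg_left h (by positivity) (by nlinarith)
    _ = 2 * A / σ ^ 2 * z⁻¹ + 2 * B / σ ^ 2 * (z ^ 2)⁻¹ := by
        field_simp

section quadratic

variable {μ : Measure ℝ} {δ c σ : ℝ}

lemma intervalIntegrable_exponent_div_quadratic
    (hμ : IntegrableOn (fun u : ℝ => min 1 u) (Ioi 0) μ) (hδ : 0 ≤ δ) (hc : 0 < c) (hσ : σ ≠ 0)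
    {t : ℝ} (ht : 1 ≤ t) :
    IntervalIntegrable (fun z => (δ * z + jumpExponent μ z) / (c * z + σ ^ 2 * z ^ 2 / 2))
      volume 1 t := by
  have hsub : Icc 1 t ⊆ Ici 0 := fun z hz => zero_le_one.trans hz.1
  refine MonotoneOn.intervalIntegrable_div ?_ (by fun_prop) fun z hz => ?_
  · rw [uIcc_of_le ht]
    exact ((monotone_id.const_mul hδ).monotoneOn _).add ((jumpExponent_monotoneOn hμ).mono hsub)
  · rw [uIcc_of_le ht] at hz
    have : 0 < z := zero_lt_one.trans_le hz.1
    positivity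

lemma mul_log_sub_le_integral_exponent_div_quadratic
    (hμ : IntegrableOn (fun u : ℝ => min 1 u) (Ioi 0) μ) (hδ : 0 ≤ δ) (hc : 0 < c) (hσ : σ ≠ 0)
    {t : ℝ} (ht : 1 ≤ t) :
    2 * δ / σ ^ 2 * Real.log t - 4 * δ * c / σ ^ 4 ≤
      ∫ z in (1 : ℝ)..t, (δ * z + jumpExponent μ z) / (c * z + σ ^ 2 * z ^ 2 / 2) := by
  refine mul_log_sub_le_integral ht (by positivity)
    (intervalIntegrable_exponent_div_quadratic hμ hδ hc hσ ht) fun z hz => ?_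
  have hz0 : 0 < z := zero_lt_one.trans_le hz.1
  refine (mul_inv_sub_le_div_quadratic hδ hc.le hσ hz0).trans
    (div_le_div_of_nonneg_right ?_ (by positivity))
  linarith [jumpExponent_nonneg (μ := μ) hz0.le]

lemma exists_integral_exponent_div_quadratic_le_mul_log_add
    (hμ : IntegrableOn (fun u : ℝ => min 1 u) (Ioi 0) μ) (hδ : 0 ≤ δ) (hc : 0 < c) (hσ : σ ≠ 0)
    {p : ℝ} (hp : 2 * δ / σ ^ 2 < p) : ∃ b, ∀ t, 1 ≤ t →
      ∫ z in (1 : ℝ)..t, (δ * z + jumpExponent μ z) / (c * z + σ ^ 2 * z ^ 2 / 2) ≤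
        p * Real.log t + b := by
  have hσ2 : 0 < σ ^ 2 := by positivity
  set ε := p * σ ^ 2 / 2 - δ
  have hε : 0 < ε := by
    rw [div_lt_iff₀ hσ2] at hp
    simp only [ε]; linarith
  obtain ⟨C, hC, hIC⟩ := exists_jumpExponent_le_mul_add hμ hε
  refine ⟨2 * C / σ ^ 2, fun t ht => integral_le_mul_log_add ht (by positivity)
    (intervalIntegrable_exponent_div_quadratic hμ hδ hc hσ ht) fun z hz => ?_⟩
  have hz0 : 0 < z := zero_lt_one.trans_le hz.1
  have hp_eq : p = 2 * (δ + ε) / σ ^ 2 := by simp only [ε]; field_simp; ring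
  rw [hp_eq]
  refine (div_le_div_of_nonneg_right (by linarith [hIC z hz0.le] :
      δ * z + jumpExponent μ z ≤ (δ + ε) * z + C) (by positivity)).trans
    (div_quadratic_le hc.le hσ hz0 (by positivity))

end quadratic

theorem stmt_7_general
    (μ : Measure ℝ) (δ c σ : ℝ)
    (hμint : ∫⁻ u in Ioi (0:ℝ), ENNReal.ofReal (min 1 u) ∂μ < ⊤)
    (hδ : 0 ≤ δ) (hc : 0 < c) (hσ : 0 < σ)
    (φ ω : ℝ → ℝ)
    (hφ : ∀ z, φ z = δ * z + ∫ u in Ioi (0:ℝ), (1 - Real.exp (-(z * u))) ∂μ)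
    (hω : ∀ z, ω z = c * z + σ ^ 2 * z ^ 2 / 2) :
    (∫⁻ lam in Ioi (1:ℝ),
        ENNReal.ofReal ((1 / ω lam) * Real.exp (∫ z in (1:ℝ)..lam, φ z / ω z))) = ⊤ ↔
      σ ^ 2 ≤ 2 * δ := by
  have hμ := integrableOn_min_one_of_lintegral_lt_top hμint
  obtain rfl : φ = fun z => δ * z + jumpExponent μ z := funext hφ
  obtain rfl : ω = fun z => c * z + σ ^ 2 * z ^ 2 / 2 := funext hω
  have hσ2 : 0 < σ ^ 2 := by positivity
  constructor
  · intro htop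
    by_contra! hlt
    obtain ⟨p, hp, hp1⟩ := exists_between ((div_lt_one hσ2).mpr hlt)
    obtain ⟨b, hb⟩ :=
      exists_integral_exponent_div_quadratic_le_mul_log_add hμ hδ hc hσ.ne' hp
    refine (lintegral_lt_top_of_le_mul_log_add (half_pos hσ2) hp1 (fun t ht => ?_)
      fun t ht => hb t ht.le).ne htop
    nlinarith [mul_pos hc (zero_lt_one.trans ht)]
  · intro h
    refine lintegral_eq_top_of_mul_log_sub_le (A := c + σ ^ 2 / 2) (by positivity)
      ((one_le_div hσ2).mpr h) (fun t ht => ?_) (fun t ht => ?_)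
      fun t ht => mul_log_sub_le_integral_exponent_div_quadratic hμ hδ hc hσ.ne' ht.le
    · have := zero_lt_one.trans ht
      positivity
    · nlinarith [mul_pos hc (zero_lt_one.trans ht)]

/-- The integral ∫_1^∞ (1/ω(λ)) exp{∫_1^λ φ(z)/ω(z) dz} dλ is infinite iff 2δ ≥ σ². -/
theorem stmt_7
    (μ : Measure ℝ) (δ c σ : ℝ)
    (hμ0 : μ (Iic 0) = 0)
    (hμint : ∫⁻ u in Ioi (0:ℝ), ENNReal.ofReal (min 1 u) ∂μ < ⊤)
    (hδ : 0 ≤ δ) (hc : 0 < c) (hσ : 0 < σ)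
    (φ ω : ℝ → ℝ)
    (hφ : ∀ z, φ z = δ * z + ∫ u in Ioi (0:ℝ), (1 - Real.exp (-(z * u))) ∂μ)
    (hω : ∀ z, ω z = c * z + σ ^ 2 * z ^ 2 / 2) :
    (∫⁻ lam in Ioi (1:ℝ),
        ENNReal.ofReal ((1 / ω lam) * Real.exp (∫ z in (1:ℝ)..lam, φ z / ω z))) = ⊤ ↔
      σ ^ 2 ≤ 2 * δ :=
  stmt_7_general μ δ c σ hμint hδ hc hσ φ ω hφ hω
end

section
/- Assume the log-moment condition and 2δ > σ². Setting m(λ) := −∫_0^λ φ(z)/ω(z) dz (which is finite for every λ ≥ 0 under the log-moment condition), one has ∫_0^∞ e^{m(λ)} dλ < ∞. -/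
/-!
Since `1 - e^{-x} ≤ 2x/(1+x)`, Tonelli gives
`∫_0^b φ(z)/z dz ≤ δ b + 2 ∫ log(1 + b u) μ(du)`, which is finite by the integrability of `1 ∧ u`
near `0` and the log-moment condition at infinity; as `ω(z) ≥ c z`, this makes `φ/ω` locally
integrable on `[0, ∞)`. Conversely `φ(z) ≥ δ z` gives `φ/ω ≥ (δ/c)/(1 + a z)` with `a = σ²/(2c)`,
so `e^{m(λ)} ≤ (1 + a λ)^{-p}` with `p = 2δ/σ² > 1`, which is integrable.
-/

open MeasureTheory Set Real
open scoped ENNReal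

theorem one_sub_exp_neg_le_two_mul_div_one_add {x : ℝ} (hx : 0 ≤ x) :
    1 - exp (-x) ≤ 2 * x / (1 + x) := by
  rw [le_div_iff₀ (by linarith)]
  rcases le_total x 1 with h | h
  · nlinarith [add_one_le_exp (-x)]
  · nlinarith [exp_pos (-x)]

theorem log_one_add_mul_le {a u : ℝ} (ha : 0 ≤ a) (hu : 1 ≤ u) :
    log (1 + a * u) ≤ a + log u := calc
  log (1 + a * u) ≤ log ((1 + a) * u) := log_le_log (by positivity) (by nlinarith)
  _ = log (1 + a) + log u := log_mul (by positivity) (by positivity)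
  _ ≤ a + log u := by
    gcongr; linarith [log_le_sub_one_of_pos (x := 1 + a) (by positivity)]

theorem integral_div_one_add_mul {u b : ℝ} (hu : 0 ≤ u) (hb : 0 ≤ b) :
    ∫ z in 0..b, u / (1 + z * u) = log (1 + b * u) := by
  have hpos : ∀ z ∈ uIcc 0 b, 0 < 1 + z * u := fun z hz => by
    rw [uIcc_of_le hb] at hz; have := hz.1; positivity
  have hderiv : ∀ z ∈ uIcc 0 b, HasDerivAt (fun z => log (1 + z * u)) (u / (1 + z * u)) z :=
    fun z hz => by
      simpa using ((hasDerivAt_mul_const u).const_add 1).log (hpos z hz).ne'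
  rw [intervalIntegral.integral_eq_sub_of_hasDerivAt hderiv
    (ContinuousOn.intervalIntegrable (continuousOn_const.div (by fun_prop)
      fun z hz => (hpos z hz).ne'))]
  simp

theorem sFinite_of_lintegral_lt_top {α : Type*} [MeasurableSpace α] {μ : Measure α}
    {f : α → ℝ≥0∞} (hf : AEMeasurable f μ) (hfin : ∫⁻ x, f x ∂μ < ⊤) (hne : ∀ᵐ x ∂μ, f x ≠ 0) :
    SFinite μ :=
  have : IsFiniteMeasure (μ.withDensity f) := isFiniteMeasure_withDensity hfin.ne
  sFinite_of_absolutelyContinuous (withDensity_absolutelyContinuous' hf hne)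

theorem sFinite_restrict_Ioi_of_lintegral_min_one {μ : Measure ℝ}
    (hμint : ∫⁻ u in Ioi 0, ENNReal.ofReal (min 1 u) ∂μ < ⊤) : SFinite (μ.restrict (Ioi 0)) :=
  sFinite_of_lintegral_lt_top (by fun_prop) hμint <| ae_restrict_of_forall_mem measurableSet_Ioi
    fun u hu => ENNReal.ofReal_pos.mpr (lt_min one_pos hu) |>.ne'

theorem lintegral_ofReal_log_one_add_mul_lt_top {μ : Measure ℝ}
    (hμint : ∫⁻ u in Ioi 0, ENNReal.ofReal (min 1 u) ∂μ < ⊤)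
    (hlog : ∫⁻ u in Ioi 1, ENNReal.ofReal (log u) ∂μ < ⊤) {b : ℝ} (hb : 0 ≤ b) :
    ∫⁻ u in Ioi 0, ENNReal.ofReal (log (1 + b * u)) ∂μ < ⊤ := by
  have hbound : ∀ u ∈ Ioi (0 : ℝ), ENNReal.ofReal (log (1 + b * u))
      ≤ ENNReal.ofReal b * ENNReal.ofReal (min 1 u) + ENNReal.ofReal (log u) := by
    intro u hu
    rw [← ENNReal.ofReal_mul hb]
    rcases le_or_gt u 1 with hu1 | hu1
    · rw [min_eq_right hu1]
      refine le_add_right (ENNReal.ofReal_le_ofReal ?_)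
      linarith [log_le_sub_one_of_pos (x := 1 + b * u) (by positivity [mem_Ioi.mp hu])]
    · rw [min_eq_left hu1.le, mul_one, ← ENNReal.ofReal_add hb (log_nonneg hu1.le)]
      exact ENNReal.ofReal_le_ofReal (log_one_add_mul_le hb hu1.le)
  have hlog_Ioi_zero : ∫⁻ u in Ioi 0, ENNReal.ofReal (log u) ∂μ
      = ∫⁻ u in Ioi 1, ENNReal.ofReal (log u) ∂μ := by
    rw [← Ioc_union_Ioi_eq_Ioi zero_le_one, lintegral_union measurableSet_Ioi Ioc_disjoint_Ioi_same,
      setLIntegral_congr_fun measurableSet_Ioc (g := fun _ => 0)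
        fun u hu => ENNReal.ofReal_eq_zero.mpr (log_nonpos hu.1.le hu.2),
      lintegral_zero, zero_add]
  calc ∫⁻ u in Ioi 0, ENNReal.ofReal (log (1 + b * u)) ∂μ
      ≤ ∫⁻ u in Ioi 0, (ENNReal.ofReal b * ENNReal.ofReal (min 1 u) + ENNReal.ofReal (log u)) ∂μ :=
        setLIntegral_mono (by fun_prop) hbound
    _ = ENNReal.ofReal b * ∫⁻ u in Ioi 0, ENNReal.ofReal (min 1 u) ∂μ
          + ∫⁻ u in Ioi 1, ENNReal.ofReal (log u) ∂μ := by
        rw [lintegral_add_left (by fun_prop), lintegral_const_mul _ (by fun_prop), hlog_Ioi_zero]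
    _ < ⊤ := ENNReal.add_lt_top.mpr ⟨ENNReal.mul_lt_top ENNReal.ofReal_lt_top hμint, hlog⟩

theorem lintegral_ofReal_div_one_add_mul {u b : ℝ} (hu : 0 ≤ u) (hb : 0 ≤ b) :
    ∫⁻ z in Ioc 0 b, ENNReal.ofReal (u / (1 + z * u)) = ENNReal.ofReal (log (1 + b * u)) := by
  have hpos : ∀ z ∈ Icc 0 b, 0 < 1 + z * u := fun z hz => by have := hz.1; positivity
  rw [← ofReal_integral_eq_lintegral_ofReal, ← intervalIntegral.integral_of_le hb,
    integral_div_one_add_mul hu hb]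
  · exact ((continuousOn_const.div (by fun_prop) fun z hz => (hpos z hz).ne').integrableOn_Icc
      ).mono_set Ioc_subset_Icc_self
  · filter_upwards [ae_restrict_mem measurableSet_Ioc] with z hz
    exact div_nonneg hu (hpos z (Ioc_subset_Icc_self hz)).le

noncomputable def laplaceExponent (μ : Measure ℝ) (δ z : ℝ) : ℝ :=
  δ * z + ∫ u in Ioi 0, (1 - exp (-(z * u))) ∂μ

section LaplaceExponent

variable {μ : Measure ℝ} {δ : ℝ}

theorem mul_le_laplaceExponent {z : ℝ} (hz : 0 ≤ z) : δ * z ≤ laplaceExponent μ δ z := by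
  refine le_add_of_nonneg_right (setIntegral_nonneg measurableSet_Ioi fun u hu => ?_)
  have : -(z * u) ≤ 0 := neg_nonpos.mpr (mul_nonneg hz (le_of_lt hu))
  linarith [exp_le_one_iff.mpr this]

theorem measurable_laplaceExponent [SFinite (μ.restrict (Ioi 0))] :
    Measurable (laplaceExponent μ δ) := by
  have h : StronglyMeasurable (Function.uncurry fun z u : ℝ => 1 - exp (-(z * u))) :=
    (by fun_prop : Measurable _).stronglyMeasurable
  exact (measurable_id.const_mul δ).add h.integral_prod_right.measurable

theorem enorm_laplaceExponent_div_le {z : ℝ} (hz : 0 < z) :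
    ‖laplaceExponent μ δ z / z‖ₑ
      ≤ ‖δ‖ₑ + 2 * ∫⁻ u in Ioi 0, ENNReal.ofReal (u / (1 + z * u)) ∂μ := by
  have hsplit : laplaceExponent μ δ z / z = δ + ∫ u in Ioi 0, (1 - exp (-(z * u))) / z ∂μ := by
    rw [laplaceExponent, integral_div]; field_simp
  rw [hsplit, ← lintegral_const_mul' _ _ ENNReal.ofNat_ne_top]
  refine (enorm_add_le _ _).trans (add_le_add_right ?_ _)
  refine (enorm_integral_le_lintegral_enorm _).trans
    (setLIntegral_mono (by fun_prop) fun u hu => ?_)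
  have hzu : 0 ≤ z * u := mul_nonneg hz.le (le_of_lt hu)
  rw [Real.enorm_eq_ofReal_abs, ← ENNReal.ofReal_ofNat 2, ← ENNReal.ofReal_mul zero_le_two]
  refine ENNReal.ofReal_le_ofReal ?_
  rw [abs_of_nonneg (div_nonneg (by linarith [exp_le_one_iff.mpr (neg_nonpos.mpr hzu)]) hz.le),
    div_le_iff₀ hz]
  calc 1 - exp (-(z * u)) ≤ 2 * (z * u) / (1 + z * u) := one_sub_exp_neg_le_two_mul_div_one_add hzu
    _ = 2 * (u / (1 + z * u)) * z := by ring

theorem integrableOn_laplaceExponent_div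
    (hμint : ∫⁻ u in Ioi 0, ENNReal.ofReal (min 1 u) ∂μ < ⊤)
    (hlog : ∫⁻ u in Ioi 1, ENNReal.ofReal (log u) ∂μ < ⊤) {b : ℝ} (hb : 0 ≤ b) :
    IntegrableOn (fun z => laplaceExponent μ δ z / z) (Ioc 0 b) := by
  have := sFinite_restrict_Ioi_of_lintegral_min_one hμint
  refine ⟨(measurable_laplaceExponent.div measurable_id).aestronglyMeasurable, ?_⟩
  calc ∫⁻ z in Ioc 0 b, ‖laplaceExponent μ δ z / z‖ₑ
      ≤ ∫⁻ z in Ioc 0 b, (‖δ‖ₑ + 2 * ∫⁻ u in Ioi 0, ENNReal.ofReal (u / (1 + z * u)) ∂μ) :=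
        setLIntegral_mono' measurableSet_Ioc fun z hz => enorm_laplaceExponent_div_le hz.1
    _ = ‖δ‖ₑ * ENNReal.ofReal b
          + 2 * ∫⁻ u in Ioi 0, (∫⁻ z in Ioc 0 b, ENNReal.ofReal (u / (1 + z * u))) ∂μ := by
        rw [lintegral_add_left measurable_const, setLIntegral_const, Real.volume_Ioc, sub_zero,
          lintegral_const_mul _ (Measurable.lintegral_prod_right (by fun_prop)),
          lintegral_lintegral_swap (by fun_prop)]
    _ = ‖δ‖ₑ * ENNReal.ofReal b + 2 * ∫⁻ u in Ioi 0, ENNReal.ofReal (log (1 + b * u)) ∂μ := by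
        congr 2
        exact setLIntegral_congr_fun measurableSet_Ioi fun u hu =>
          lintegral_ofReal_div_one_add_mul (mem_Ioi.mp hu).le hb
    _ < ⊤ := ENNReal.add_lt_top.mpr ⟨ENNReal.mul_lt_top enorm_lt_top ENNReal.ofReal_lt_top,
        ENNReal.mul_lt_top ENNReal.ofNat_lt_top
          (lintegral_ofReal_log_one_add_mul_lt_top hμint hlog hb)⟩

theorem intervalIntegrable_laplaceExponent_div_quadratic
    (hμint : ∫⁻ u in Ioi 0, ENNReal.ofReal (min 1 u) ∂μ < ⊤)
    (hlog : ∫⁻ u in Ioi 1, ENNReal.ofReal (log u) ∂μ < ⊤) {c : ℝ} (hc : 0 < c) (σ : ℝ) {b : ℝ}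
    (hb : 0 ≤ b) :
    IntervalIntegrable (fun z => laplaceExponent μ δ z / (c * z + σ ^ 2 * z ^ 2 / 2))
      volume 0 b := by
  have := sFinite_restrict_Ioi_of_lintegral_min_one hμint
  rw [intervalIntegrable_iff_integrableOn_Ioc_of_le hb]
  refine ((integrableOn_laplaceExponent_div (δ := δ) hμint hlog hb).const_mul c⁻¹).mono
    (measurable_laplaceExponent.div (by fun_prop)).aestronglyMeasurable ?_
  filter_upwards [ae_restrict_mem measurableSet_Ioc] with z hz
  have hz0 : 0 < z := hz.1
  rw [Real.norm_eq_abs, Real.norm_eq_abs, abs_div, abs_mul, abs_div, abs_inv, abs_of_pos hc,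
    abs_of_pos hz0, abs_of_pos (by positivity : 0 < c * z + σ ^ 2 * z ^ 2 / 2), inv_mul_eq_div,
    div_div]
  exact div_le_div_of_nonneg_left (abs_nonneg _) (by positivity) (by nlinarith [sq_nonneg (σ * z)])

end LaplaceExponent

theorem integrableOn_Ioi_one_add_mul_rpow_neg {a p : ℝ} (ha : 0 < a) (hp : 1 < p) :
    IntegrableOn (fun x => (1 + a * x) ^ (-p)) (Ioi 0) := by
  have h : Integrable (fun x : ℝ => (1 + ‖a * x‖) ^ (-p)) :=
    (integrable_one_add_norm (E := ℝ) (by simpa using hp)).comp_mul_left' ha.ne'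
  refine h.integrableOn.congr_fun (fun x hx => ?_) measurableSet_Ioi
  simp only [Real.norm_eq_abs, abs_of_pos (mul_pos ha (mem_Ioi.mp hx))]

theorem integrableOn_exp_neg_integral_of_le {f : ℝ → ℝ} {a p : ℝ} (ha : 0 < a) (hp : 1 < p)
    (hf : ∀ b, 0 ≤ b → IntervalIntegrable f volume 0 b)
    (hf_ge : ∀ z, 0 < z → p * (a / (1 + z * a)) ≤ f z) :
    IntegrableOn (fun b => exp (-∫ z in 0..b, f z)) (Ioi 0) := by
  have hlog_le : ∀ b, 0 ≤ b → p * log (1 + b * a) ≤ ∫ z in 0..b, f z := fun b hb => by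
    rw [← integral_div_one_add_mul ha.le hb, ← intervalIntegral.integral_const_mul]
    refine intervalIntegral.integral_mono_on_of_le_Ioo hb ?_ (hf b hb) fun z hz => hf_ge z hz.1
    exact (continuousOn_const.mul (continuousOn_const.div (by fun_prop) fun z hz => by
      rw [uIcc_of_le hb] at hz; have := hz.1; positivity)).intervalIntegrable
  have hanti : AntitoneOn (fun b => exp (-∫ z in 0..b, f z)) (Ioi 0) := fun x hx y _ hxy => by
    refine exp_le_exp.mpr (neg_le_neg (intervalIntegral.integral_mono_interval le_rfl
      (mem_Ioi.mp hx).le hxy ?_ (hf y (hx.out.le.trans hxy))))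
    filter_upwards [ae_restrict_mem measurableSet_Ioc] with z hz
    exact le_trans (by have := hz.1; positivity) (hf_ge z hz.1)
  refine (integrableOn_Ioi_one_add_mul_rpow_neg ha hp).mono'
    (aemeasurable_restrict_of_antitoneOn measurableSet_Ioi hanti).aestronglyMeasurable ?_
  filter_upwards [ae_restrict_mem measurableSet_Ioi] with b hb
  rw [Real.norm_of_nonneg (exp_pos _).le, rpow_def_of_pos (by positivity [mem_Ioi.mp hb]),
    mul_comm a b]
  exact exp_le_exp.mpr (by linarith [hlog_le b (mem_Ioi.mp hb).le])

theorem stmt_11_general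
    (μ : Measure ℝ) (δ c σ : ℝ)
    (hμint : ∫⁻ u in Ioi (0:ℝ), ENNReal.ofReal (min 1 u) ∂μ < ⊤)
    (hc : 0 < c) (hσ : 0 < σ)
    (hlog : ∫⁻ u in Ioi (1:ℝ), ENNReal.ofReal (Real.log u) ∂μ < ⊤)
    (h2δ : σ ^ 2 < 2 * δ)
    (φ ω m : ℝ → ℝ)
    (hφ : ∀ z, φ z = δ * z + ∫ u in Ioi (0:ℝ), (1 - Real.exp (-(z * u))) ∂μ)
    (hω : ∀ z, ω z = c * z + σ ^ 2 * z ^ 2 / 2)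
    (hm : ∀ lam, m lam = -∫ z in (0:ℝ)..lam, φ z / ω z) :
    (∀ lam : ℝ, 0 ≤ lam → IntervalIntegrable (fun z => φ z / ω z) volume 0 lam) ∧
    IntegrableOn (fun lam => Real.exp (m lam)) (Ioi 0) volume := by
  obtain rfl : φ = laplaceExponent μ δ := funext hφ
  obtain rfl : ω = fun z => c * z + σ ^ 2 * z ^ 2 / 2 := funext hω
  obtain rfl : m = fun b => -∫ z in (0:ℝ)..b, laplaceExponent μ δ z / (c * z + σ ^ 2 * z ^ 2 / 2) :=
    funext hm
  have hint : ∀ b : ℝ, 0 ≤ b → IntervalIntegrable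
      (fun z => laplaceExponent μ δ z / (c * z + σ ^ 2 * z ^ 2 / 2)) volume 0 b :=
    fun b hb => intervalIntegrable_laplaceExponent_div_quadratic hμint hlog hc σ hb
  refine ⟨hint, integrableOn_exp_neg_integral_of_le (a := σ ^ 2 / (2 * c))
    (p := 2 * δ / σ ^ 2) (by positivity) ((one_lt_div (by positivity)).mpr h2δ) hint
    fun z hz => ?_⟩
  calc 2 * δ / σ ^ 2 * (σ ^ 2 / (2 * c) / (1 + z * (σ ^ 2 / (2 * c))))
      = δ * z / (c * z + σ ^ 2 * z ^ 2 / 2) := by field_simp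
    _ ≤ laplaceExponent μ δ z / (c * z + σ ^ 2 * z ^ 2 / 2) :=
      div_le_div_of_nonneg_right (mul_le_laplaceExponent hz.le) (by positivity)

/-- Assume the log-moment condition and 2δ > σ². Setting m(λ) := −∫_0^λ φ(z)/ω(z) dz
(which is finite for every λ ≥ 0 under the log-moment condition), one has
∫_0^∞ e^{m(λ)} dλ < ∞. -/
theorem stmt_11
    (μ : Measure ℝ) (δ c σ : ℝ)
    (hμ0 : μ (Iic 0) = 0)
    (hμint : ∫⁻ u in Ioi (0:ℝ), ENNReal.ofReal (min 1 u) ∂μ < ⊤)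
    (hδ : 0 ≤ δ) (hc : 0 < c) (hσ : 0 < σ)
    (hlog : ∫⁻ u in Ioi (1:ℝ), ENNReal.ofReal (Real.log u) ∂μ < ⊤)
    (h2δ : σ ^ 2 < 2 * δ)
    (φ ω m : ℝ → ℝ)
    (hφ : ∀ z, φ z = δ * z + ∫ u in Ioi (0:ℝ), (1 - Real.exp (-(z * u))) ∂μ)
    (hω : ∀ z, ω z = c * z + σ ^ 2 * z ^ 2 / 2)
    (hm : ∀ lam, m lam = -∫ z in (0:ℝ)..lam, φ z / ω z) :
    (∀ lam : ℝ, 0 ≤ lam → IntervalIntegrable (fun z => φ z / ω z) volume 0 lam) ∧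
    IntegrableOn (fun lam => Real.exp (m lam)) (Ioi 0) volume :=
  stmt_11_general μ δ c σ hμint hc hσ hlog h2δ φ ω m hφ hω hm
end

section
/- For every x ≥ 0, the scale function S(x) := ∫_0^x exp{ 2∫_1^u (g(z) − bz)/(2γ²z + σ²z²) dz } du is finite; that is, u ↦ exp{ 2∫_1^u (g(z) − bz)/(2γ²z + σ²z²) dz } is integrable on (0,x) for every x > 0. -/
/-!
Write `f z = (g z - b z) / (2γ²z + σ²z²)` and `F u = ∫_1^u f`. Since `g` is continuous with
`g 0 = 0`, near `0⁺` we have `|g z| ≤ γ²/4`, hence `f z ≥ -(1/(8z) + c)`. Then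
`u ↦ F u + (1/8) log u + c u` is monotone near `0⁺`, so `F u ≤ K - (1/8) log u` and
`exp (2 F u) ≤ e^{2K} u^{-1/4}`, which is integrable at `0`; away from `0` the integrand is
continuous.
-/

open MeasureTheory Set Filter Topology Real

theorem hasDerivAt_integral_of_continuousOn {E : Type*} [NormedAddCommGroup E] [NormedSpace ℝ E]
    [CompleteSpace E] {f : ℝ → E} {s : Set ℝ} [s.OrdConnected] (hs : IsOpen s)
    (hf : ContinuousOn f s) {a u : ℝ} (ha : a ∈ s) (hu : u ∈ s) :
    HasDerivAt (fun t => ∫ z in a..t, f z) (f u) u :=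
  intervalIntegral.integral_hasDerivAt_right
    ((hf.mono (OrdConnected.uIcc_subset ‹_› ha hu)).intervalIntegrable)
    (hf.stronglyMeasurableAtFilter hs u hu) (hf.continuousAt (hs.mem_nhds hu))

theorem integrableOn_Ioc_zero_of_eventually_le_rpow {φ : ℝ → ℝ} {C s x : ℝ}
    (hφ : ContinuousOn φ (Ioi 0)) (hs : -1 < s)
    (hbound : ∀ᶠ u in 𝓝[>] 0, ‖φ u‖ ≤ C * u ^ s) :
    IntegrableOn φ (Ioc 0 x) := by
  obtain ⟨δ, hδ, hδbound⟩ := mem_nhdsGT_iff_exists_Ioc_subset.1 hbound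
  have hnear : IntegrableOn φ (Ioc 0 δ) :=
    Integrable.mono' ((intervalIntegral.intervalIntegrable_rpow' hs).1.const_mul C)
      ((hφ.mono Ioc_subset_Ioi_self).aestronglyMeasurable measurableSet_Ioc)
      ((ae_restrict_iff' measurableSet_Ioc).2 (ae_of_all _ hδbound))
  have hfar : IntegrableOn φ (Icc δ x) :=
    (hφ.mono fun u hu => lt_of_lt_of_le hδ hu.1).integrableOn_Icc
  refine (hnear.union hfar).mono_set fun u hu => ?_
  rcases le_or_gt u δ with huδ | hδu
  · exact Or.inl ⟨hu.1, huδ⟩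
  · exact Or.inr ⟨hδu.le, hu.2⟩

theorem exists_eventually_le_sub_mul_log {F f : ℝ → ℝ} {a c : ℝ}
    (hF : ∀ u > 0, HasDerivAt F (f u) u) (hf : ∀ᶠ u in 𝓝[>] 0, -(a * u⁻¹ + c) ≤ f u) :
    ∃ K, ∀ᶠ u in 𝓝[>] 0, F u ≤ K - a * log u := by
  obtain ⟨δ, hδ, hδf⟩ := mem_nhdsGT_iff_exists_Ioc_subset.1 hf
  set H : ℝ → ℝ := fun u => F u + a * log u + c * u
  have hH : ∀ u > 0, HasDerivAt H (f u + a * u⁻¹ + c) u := fun u hu =>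
    (((hF u hu).add ((hasDerivAt_log hu.ne').const_mul a)).add
      ((hasDerivAt_id u).const_mul c)).congr_deriv (by simp)
  have hmono : MonotoneOn H (Ioc 0 δ) := by
    refine monotoneOn_of_hasDerivWithinAt_nonneg (f' := fun u => f u + a * u⁻¹ + c)
      (convex_Ioc 0 δ)
      (fun u hu => (hH u hu.1).continuousAt.continuousWithinAt) (fun u hu => ?_) (fun u hu => ?_)
    all_goals rw [interior_Ioc] at hu
    · exact (hH u hu.1).hasDerivWithinAt
    · have hfu : -(a * u⁻¹ + c) ≤ f u := hδf (Ioo_subset_Ioc_self hu)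
      linarith
  refine ⟨H δ + |c| * δ, mem_of_superset (Ioc_mem_nhdsGT hδ) fun u hu => ?_⟩
  have hHu : H u ≤ H δ := hmono hu ⟨hδ, le_rfl⟩ hu.2
  have hcu : -(c * u) ≤ |c| * δ := by
    calc -(c * u) ≤ |c| * u := by nlinarith [neg_abs_le c, hu.1]
      _ ≤ |c| * δ := by gcongr; exact hu.2
  simp only [H] at hHu
  show F u ≤ F δ + a * log δ + c * δ + |c| * δ - a * log u
  linarith

theorem abs_sub_mul_div_quadratic_le {y b γ σ z ε : ℝ} (hγ : 0 < γ) (hz : 0 < z)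
    (hy : |y| ≤ ε) :
    |(y - b * z) / (2 * γ ^ 2 * z + σ ^ 2 * z ^ 2)| ≤ ε / (2 * γ ^ 2) * z⁻¹ + |b| / (2 * γ ^ 2) := by
  have hε : 0 ≤ ε := (abs_nonneg y).trans hy
  have hpos : 0 < 2 * γ ^ 2 * z + σ ^ 2 * z ^ 2 := by positivity
  have hden : 2 * γ ^ 2 * z ≤ 2 * γ ^ 2 * z + σ ^ 2 * z ^ 2 := by nlinarith [sq_nonneg (σ * z)]
  have hnum : |y - b * z| ≤ ε + |b| * z := by
    calc |y - b * z| ≤ |y| + |b * z| := abs_sub _ _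
      _ ≤ ε + |b| * z := by rw [abs_mul, abs_of_pos hz]; linarith
  calc |(y - b * z) / (2 * γ ^ 2 * z + σ ^ 2 * z ^ 2)|
      = |y - b * z| / (2 * γ ^ 2 * z + σ ^ 2 * z ^ 2) := by
        rw [abs_div, abs_of_pos hpos]
    _ ≤ (ε + |b| * z) / (2 * γ ^ 2 * z) := div_le_div₀ (by positivity) hnum (by positivity) hden
    _ = ε / (2 * γ ^ 2) * z⁻¹ + |b| / (2 * γ ^ 2) := by field_simp

theorem stmt_15_general (g : ℝ → ℝ) (b γ σ : ℝ)
    (hg_cont : ContinuousOn g (Ici 0)) (hg0 : g 0 = 0)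
    (hγ : 0 < γ) :
    ∀ x : ℝ, 0 < x →
      IntegrableOn
        (fun u => Real.exp
          (2 * ∫ z in (1:ℝ)..u, (g z - b * z) / (2 * γ ^ 2 * z + σ ^ 2 * z ^ 2)))
        (Ioc 0 x) volume := by
  intro x _
  set f : ℝ → ℝ := fun z => (g z - b * z) / (2 * γ ^ 2 * z + σ ^ 2 * z ^ 2)
  have hf : ContinuousOn f (Ioi 0) :=
    ((hg_cont.mono Ioi_subset_Ici_self).sub (by fun_prop)).div (by fun_prop)
      fun z (hz : 0 < z) => (by positivity : 0 < 2 * γ ^ 2 * z + σ ^ 2 * z ^ 2).ne'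
  have hF : ∀ u > 0, HasDerivAt (fun t => ∫ z in (1:ℝ)..t, f z) (f u) u := fun u hu =>
    hasDerivAt_integral_of_continuousOn isOpen_Ioi hf (mem_Ioi.2 one_pos) hu
  have hg_small : ∀ᶠ z in 𝓝[>] 0, |g z| ≤ γ ^ 2 / 4 := by
    have hg := (hg_cont 0 self_mem_Ici).mono Ioi_subset_Ici_self
    rw [ContinuousWithinAt, hg0] at hg
    filter_upwards [hg (Metric.closedBall_mem_nhds 0 (by positivity : 0 < γ ^ 2 / 4))] with z hz
    simpa using hz
  obtain ⟨K, hK⟩ := exists_eventually_le_sub_mul_log hF (a := 1 / 8) (c := |b| / (2 * γ ^ 2)) (by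
    filter_upwards [hg_small, self_mem_nhdsWithin] with z hgz (hz : 0 < z)
    have hfz := abs_sub_mul_div_quadratic_le (b := b) (σ := σ) hγ hz hgz
    rw [show γ ^ 2 / 4 / (2 * γ ^ 2) = 1 / 8 by field_simp; norm_num] at hfz
    exact neg_le_of_abs_le hfz)
  refine integrableOn_Ioc_zero_of_eventually_le_rpow (C := exp (2 * K)) (s := -(1 / 4))
    (continuousOn_const.mul fun u hu => (hF u hu).continuousAt.continuousWithinAt).rexp
    (by norm_num) ?_
  filter_upwards [hK, self_mem_nhdsWithin] with u hu (hu0 : 0 < u)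
  rw [norm_of_nonneg (exp_pos _).le, rpow_def_of_pos hu0, ← exp_add]
  exact exp_le_exp.2 (by linarith)

/-- For every x ≥ 0 the scale function S(x) = ∫_0^x exp{2∫_1^u (g(z)−bz)/(2γ²z+σ²z²) dz} du
is finite; i.e. the integrand is integrable on (0,x) for every x > 0. -/
theorem stmt_15 (g : ℝ → ℝ) (b γ σ : ℝ)
    (hg_cont : ContinuousOn g (Ici 0)) (hg0 : g 0 = 0)
    (hγ : 0 < γ) (hσ : 0 ≤ σ) :
    ∀ x : ℝ, 0 < x →
      IntegrableOn
        (fun u => Real.exp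
          (2 * ∫ z in (1:ℝ)..u, (g z - b * z) / (2 * γ ^ 2 * z + σ ^ 2 * z ^ 2)))
        (Ioc 0 x) volume :=
  stmt_15_general g b γ σ hg_cont hg0 hγ
end

section
/- Let ε := sup_{0<z≤x} |g(z) − bz| and suppose x ∈ (0,1) is small enough that 2ε < γ². Then the double integral Σ(0,x) := ∫_0^x ( ∫_u^x (1/d(η)) exp{ ∫_η^1 (g(z) − bz)/d(z) dz } dη ) · exp{ −∫_u^1 (g(z) − bz)/d(z) dz } du is finite, where d(z) := γ²z + σ²z²/2. -/
open MeasureTheory Set Real intervalIntegral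

/-!
Write `h = (g - b z) / d` and `H u = ∫_u^1 h`. Since `d z ≥ γ² z`, we have `|h z| ≤ α / z` on
`(0, x]` with `α = ε / γ² < 1/2`, so `|H u| ≤ |H x| + α log (x / u)` and `exp (± H u) = O(u^(-α))`.
Hence the inner integrand is `O(η^(-1-α)) ⊆ O(η^(-3/2))`, the inner integral is `O(u^(-1/2))`,
and the outer integrand is `O(u^(-1/2-α))`, which is integrable at `0` because `α < 1/2`.
-/

lemma continuousOn_intervalIntegral_left_of_continuousOn_Ioi {E : Type*} [NormedAddCommGroup E]
    [NormedSpace ℝ E] [CompleteSpace E] {f : ℝ → E} {a c : ℝ}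
    (hf : ContinuousOn f (Ioi a)) (hc : a < c) :
    ContinuousOn (fun u => ∫ z in u..c, f z) (Ioi a) := fun u hu =>
  (integral_hasDerivAt_left ((hf.mono (ordConnected_Ioi.uIcc_subset hu hc)).intervalIntegrable)
    (hf.stronglyMeasurableAtFilter isOpen_Ioi u hu)
    (hf.continuousAt (isOpen_Ioi.mem_nhds hu))).continuousAt.continuousWithinAt

lemma abs_intervalIntegral_le_mul_log {h : ℝ → ℝ} {α u x : ℝ} (hu : 0 < u) (hux : u ≤ x)
    (hh : ∀ z ∈ Ioc u x, |h z| ≤ α / z) :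
    |∫ z in u..x, h z| ≤ α * (log x - log u) := by
  have hx : 0 < x := hu.trans_le hux
  have hint : IntervalIntegrable (fun z => α / z) volume u x :=
    (continuousOn_const.div continuousOn_id fun z hz =>
      (hu.trans_le (uIcc_of_le hux ▸ hz).1).ne').intervalIntegrable
  calc |∫ z in u..x, h z| ≤ ∫ z in u..x, α / z := by
        simpa only [Real.norm_eq_abs] using
          norm_integral_le_of_norm_le hux (f := h) (ae_of_all _ hh) hint
    _ = α * (log x - log u) := by
      simp_rw [div_eq_mul_inv]
      rw [intervalIntegral.integral_const_mul, integral_inv_of_pos hu hx, log_div hx.ne' hu.ne']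

lemma exp_abs_intervalIntegral_le_rpow {h : ℝ → ℝ} {α c x u : ℝ}
    (hcont : ContinuousOn h (Ioi 0)) (hc : 0 < c) (hu : u ∈ Ioc 0 x)
    (hbound : ∀ z ∈ Ioc 0 x, |h z| ≤ α / z) :
    exp |∫ z in u..c, h z| ≤ exp |∫ z in x..c, h z| * x ^ α * u ^ (-α) := by
  obtain ⟨hu0, hux⟩ := hu
  have hx0 := hu0.trans_le hux
  have hint : ∀ a b : ℝ, 0 < a → 0 < b → IntervalIntegrable h volume a b := fun a b ha hb =>
    (hcont.mono (ordConnected_Ioi.uIcc_subset ha hb)).intervalIntegrable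
  have hsplit : ∫ z in u..c, h z = (∫ z in u..x, h z) + ∫ z in x..c, h z :=
    (integral_add_adjacent_intervals (hint u x hu0 hx0) (hint x c hx0 hc)).symm
  have hlog := abs_intervalIntegral_le_mul_log hu0 hux fun z hz => hbound z ⟨hu0.trans hz.1, hz.2⟩
  calc exp |∫ z in u..c, h z|
      ≤ exp (|∫ z in x..c, h z| + α * (log x - log u)) := by
        rw [hsplit]
        gcongr
        exact (abs_add_le _ _).trans (by linarith)
    _ = exp |∫ z in x..c, h z| * x ^ α * u ^ (-α) := by
        rw [rpow_def_of_pos hx0, rpow_def_of_pos hu0, mul_assoc, ← exp_add, ← exp_add]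
        ring_nf

lemma intervalIntegral_le_of_le_rpow {f : ℝ → ℝ} {K p u x : ℝ} (hp : p < -1) (hu : 0 < u)
    (hux : u ≤ x) (hf : IntervalIntegrable f volume u x) (hK : 0 ≤ K)
    (hbound : ∀ η ∈ Icc u x, f η ≤ K * η ^ p) :
    ∫ η in u..x, f η ≤ K / (-(p + 1)) * u ^ (p + 1) := by
  have h0 : (0 : ℝ) ∉ uIcc u x := by
    rw [uIcc_of_le hux]; exact fun h => h.1.not_gt hu
  have hx : 0 ≤ K * x ^ (p + 1) := mul_nonneg hK (rpow_nonneg (hu.le.trans hux) _)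
  calc ∫ η in u..x, f η ≤ ∫ η in u..x, K * η ^ p :=
        integral_mono_on hux hf ((intervalIntegrable_rpow (Or.inr h0)).const_mul K) hbound
    _ = K * ((x ^ (p + 1) - u ^ (p + 1)) / (p + 1)) := by
        rw [intervalIntegral.integral_const_mul, integral_rpow (Or.inr ⟨hp.ne, h0⟩)]
    _ ≤ K / (-(p + 1)) * u ^ (p + 1) := by
        have hq : p + 1 < 0 := by linarith
        rw [div_neg, ← neg_div, mul_div_assoc', div_mul_eq_mul_div, div_le_div_right_of_neg hq]
        linarith

lemma integrableOn_Ioc_of_norm_le_rpow {E : Type*} [NormedAddCommGroup E] {F : ℝ → E}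
    {K p x : ℝ} (hF : ContinuousOn F (Ioc 0 x)) (hp : -1 < p)
    (hbound : ∀ u ∈ Ioc 0 x, ‖F u‖ ≤ K * u ^ p) :
    IntegrableOn F (Ioc 0 x) :=
  Integrable.mono' ((intervalIntegrable_rpow' hp).const_mul K).1
    (hF.aestronglyMeasurable measurableSet_Ioc)
    ((ae_restrict_iff' measurableSet_Ioc).2 (ae_of_all _ hbound))

lemma ContinuousOn.le_sSup_image_Ioc {f : ℝ → ℝ} {a b z : ℝ} (hf : ContinuousOn f (Icc a b))
    (hz : z ∈ Ioc a b) : f z ≤ sSup (f '' Ioc a b) :=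
  le_csSup ((isCompact_Icc.image_of_continuousOn hf).bddAbove.mono
    (image_mono Ioc_subset_Icc_self)) (mem_image_of_mem f hz)

theorem integrableOn_Ioc_intervalIntegral_mul_exp_mul_exp_neg {w H : ℝ → ℝ} {K C α x : ℝ}
    (hw : ContinuousOn w (Ioi 0)) (hH : ContinuousOn H (Ioi 0)) (hx0 : 0 < x) (hx1 : x ≤ 1)
    (hα : α < 1 / 2) (hw0 : ∀ η ∈ Ioc 0 x, 0 ≤ w η) (hwK : ∀ η ∈ Ioc 0 x, w η ≤ K / η)
    (hHC : ∀ u ∈ Ioc 0 x, exp |H u| ≤ C * u ^ (-α)) :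
    IntegrableOn (fun u => (∫ η in u..x, w η * exp (H η)) * exp (-H u)) (Ioc 0 x) := by
  have hx : x ∈ Ioc 0 x := ⟨hx0, le_rfl⟩
  have hK : 0 ≤ K := by
    have := (hw0 x hx).trans (hwK x hx)
    rwa [le_div_iff₀ hx0, zero_mul] at this
  have hC : 0 ≤ C := by
    have := (exp_pos _).trans_le (hHC x hx)
    exact (pos_of_mul_pos_left this (rpow_nonneg hx0.le _)).le
  have hG_cont : ContinuousOn (fun η => w η * exp (H η)) (Ioi 0) :=
    hw.mul (continuous_exp.comp_continuousOn hH)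
  have hG_bound : ∀ η ∈ Ioc 0 x, w η * exp (H η) ≤ K * C * η ^ (-1 - 1 / 2 : ℝ) := by
    intro η hη
    have hη0 := hη.1
    calc w η * exp (H η) ≤ K / η * (C * η ^ (-α)) :=
          mul_le_mul (hwK η hη) ((exp_le_exp.2 (le_abs_self _)).trans (hHC η hη))
            (exp_pos _).le (div_nonneg hK hη0.le)
      _ = K * C * η ^ (-1 - α) := by
          rw [rpow_sub hη0, rpow_neg_one, rpow_neg hη0.le]; ring
      _ ≤ K * C * η ^ (-1 - 1 / 2 : ℝ) :=
          mul_le_mul_of_nonneg_left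
            (rpow_le_rpow_of_exponent_ge hη0 (hη.2.trans hx1) (by linarith)) (mul_nonneg hK hC)
  have hinner : ∀ u ∈ Ioc 0 x,
      ∫ η in u..x, w η * exp (H η) ≤ 2 * K * C * u ^ (-(1 / 2) : ℝ) := by
    intro u hu
    refine (intervalIntegral_le_of_le_rpow (by norm_num) hu.1 hu.2
      ((hG_cont.mono (ordConnected_Ioi.uIcc_subset hu.1 hx0)).intervalIntegrable)
      (mul_nonneg hK hC) fun η hη => hG_bound η ⟨hu.1.trans_le hη.1, hη.2⟩).trans_eq ?_
    rw [show (-1 - 1 / 2 + 1 : ℝ) = -(1 / 2) by norm_num]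
    ring
  refine integrableOn_Ioc_of_norm_le_rpow (K := 2 * K * C * C) (p := -(1 / 2) - α)
    ?_ (by linarith) fun u hu => ?_
  · refine ContinuousOn.mono ?_ Ioc_subset_Ioi_self
    exact (continuousOn_intervalIntegral_left_of_continuousOn_Ioi hG_cont hx0).mul
      (continuous_exp.comp_continuousOn hH.neg)
  · have hu0 := hu.1
    have hinner_nonneg : 0 ≤ ∫ η in u..x, w η * exp (H η) :=
      integral_nonneg hu.2 fun η hη =>
        mul_nonneg (hw0 η ⟨hu0.trans_le hη.1, hη.2⟩) (exp_pos _).le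
    rw [Real.norm_eq_abs, abs_of_nonneg (mul_nonneg hinner_nonneg (exp_pos _).le)]
    calc (∫ η in u..x, w η * exp (H η)) * exp (-H u)
        ≤ 2 * K * C * u ^ (-(1 / 2) : ℝ) * (C * u ^ (-α)) :=
          mul_le_mul (hinner u hu) ((exp_le_exp.2 (neg_le_abs _)).trans (hHC u hu))
            (exp_pos _).le (by positivity)
      _ = 2 * K * C * C * u ^ (-(1 / 2) - α) := by rw [rpow_sub hu0, rpow_neg hu0.le α]; ring

theorem stmt_16_general (g : ℝ → ℝ) (b γ σ x ε : ℝ)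
    (hg_cont : ContinuousOn g (Ici 0))
    (hγ : 0 < γ)
    (d : ℝ → ℝ) (hd : ∀ z, d z = γ ^ 2 * z + σ ^ 2 * z ^ 2 / 2)
    (hx : x ∈ Ioo (0:ℝ) 1)
    (hε : ε = sSup ((fun z => |g z - b * z|) '' Ioc 0 x))
    (h2ε : 2 * ε < γ ^ 2) :
    IntegrableOn
      (fun u =>
        (∫ η in u..x, (1 / d η) * Real.exp (∫ z in η..(1:ℝ), (g z - b * z) / d z)) *
          Real.exp (-(∫ z in u..(1:ℝ), (g z - b * z) / d z)))
      (Ioc 0 x) volume := by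
  obtain ⟨hx0, hx1⟩ := hx
  have hγ2 : 0 < γ ^ 2 := by positivity
  have hd_ge : ∀ z, 0 < z → γ ^ 2 * z ≤ d z := fun z _ => by
    rw [hd]; exact le_add_of_nonneg_right (by positivity)
  have hd_pos : ∀ z, 0 < z → 0 < d z := fun z hz =>
    (mul_pos hγ2 hz).trans_le (hd_ge z hz)
  have hd_cont : Continuous d := by rw [funext hd]; fun_prop
  have hgb_cont : ContinuousOn (fun z => g z - b * z) (Ici 0) := hg_cont.sub (by fun_prop)
  have hε_ge : ∀ z ∈ Ioc 0 x, |g z - b * z| ≤ ε := fun z hz =>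
    hε ▸ (hgb_cont.abs.mono Icc_subset_Ici_self).le_sSup_image_Ioc hz
  have hε0 : 0 ≤ ε := (abs_nonneg _).trans (hε_ge x ⟨hx0, le_rfl⟩)
  have hα : ε / γ ^ 2 < 1 / 2 := by rw [div_lt_iff₀ hγ2]; linarith
  have hh_cont : ContinuousOn (fun z => (g z - b * z) / d z) (Ioi 0) :=
    (hgb_cont.mono Ioi_subset_Ici_self).div hd_cont.continuousOn fun z hz => (hd_pos z hz).ne'
  have hh_bound : ∀ z ∈ Ioc 0 x, |(g z - b * z) / d z| ≤ ε / γ ^ 2 / z := fun z hz => by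
    rw [abs_div, abs_of_pos (hd_pos z hz.1), div_div,
      div_le_div_iff₀ (hd_pos z hz.1) (mul_pos hγ2 hz.1)]
    exact (mul_le_mul_of_nonneg_right (hε_ge z hz) (mul_pos hγ2 hz.1).le).trans
      (mul_le_mul_of_nonneg_left (hd_ge z hz.1) hε0)
  exact integrableOn_Ioc_intervalIntegral_mul_exp_mul_exp_neg (K := 1 / γ ^ 2)
    (continuousOn_const.div hd_cont.continuousOn fun z hz => (hd_pos z hz).ne')
    (continuousOn_intervalIntegral_left_of_continuousOn_Ioi hh_cont one_pos) hx0 hx1.le hα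
    (fun η hη => (one_div_pos.2 (hd_pos η hη.1)).le)
    (fun η hη => by rw [div_div]; exact one_div_le_one_div_of_le (mul_pos hγ2 hη.1) (hd_ge η hη.1))
    fun u hu => exp_abs_intervalIntegral_le_rpow hh_cont one_pos hu hh_bound

/-- Let ε := sup_{0<z≤x} |g(z) − bz| and suppose x ∈ (0,1) is small enough that 2ε < γ².
Then Σ(0,x) = ∫_0^x (∫_u^x (1/d(η)) exp{∫_η^1 (g−bz)/d} dη) exp{−∫_u^1 (g−bz)/d} du is
finite, where d(z) = γ²z + σ²z²/2. -/
theorem stmt_16 (g : ℝ → ℝ) (b γ σ x ε : ℝ)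
    (hg_cont : ContinuousOn g (Ici 0)) (hg0 : g 0 = 0)
    (hγ : 0 < γ) (hσ : 0 ≤ σ)
    (d : ℝ → ℝ) (hd : ∀ z, d z = γ ^ 2 * z + σ ^ 2 * z ^ 2 / 2)
    (hx : x ∈ Ioo (0:ℝ) 1)
    (hε : ε = sSup ((fun z => |g z - b * z|) '' Ioc 0 x))
    (h2ε : 2 * ε < γ ^ 2) :
    IntegrableOn
      (fun u =>
        (∫ η in u..x, (1 / d η) * Real.exp (∫ z in η..(1:ℝ), (g z - b * z) / d z)) *
          Real.exp (-(∫ z in u..(1:ℝ), (g z - b * z) / d z)))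
      (Ioc 0 x) volume :=
  stmt_16_general g b γ σ x ε hg_cont hγ d hd hx hε h2ε
end

section
/- Fix λ > 0 and let y : (0,∞) → [0,∞) be a C¹ function with y′(z) = y(z)² − λ r(z)² for all z > 0, y(z) → 0 as z → ∞, y integrable on (0,1), and y(z) ≤ √λ · r(z) for all z outside a compact subset of (0,∞). Define Φ(z) := (e^{−m(z)}/ω(z)) · exp{ −∫_0^{I(z)} y(v) dv } · ∫_0^z exp{ m(u) + 2∫_0^{I(u)} y(v) dv } du. Then for every x > 0 the functions z ↦ e^{−xz}Φ(z), z ↦ z e^{−xz}Φ(z) and z ↦ z² e^{−xz}Φ(z) are integrable on (0,∞); consequently h(x) := 1 + λ ∫_0^∞ e^{−xz} Φ(z) dz is a well-defined, positive, non-increasing C² function on (0,∞). -/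
/-!
The density `Φ` grows at most polynomially on `(0, ∞)`, so all its Laplace moments exist and may
be differentiated under the integral sign, which gives every property of `h`.

For the growth, let `A` be the primitive of `y`. As `A ∘ I` is nondecreasing, bounding the inner
integral by its endpoint value gives `Φ z ≤ e^{A (I z)} · e^{-m z} I z / ω z`. Since `m` is
nondecreasing beyond `ϑ` and continuous on `[0, ϑ]`, `m u - m z` is bounded for `u ≤ z`, whence
`e^{-m z} I z = O(z)`, while `ω z ≥ c z`. Finally `A (I z) ≤ const + p log z` with
`p = √(2λ) / σ`: after the substitution `v = I u`, the bound `y ≤ √λ r` (valid for large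
arguments, and `I → ∞`) says that the integrand `e^{m u} y (I u)` is at most
`√λ / √(ω u) ≤ p / u`.
-/

open MeasureTheory Set Real Filter Topology

lemma abs_exp_neg_sub_one_add_le {t : ℝ} (ht : 0 ≤ t) : |exp (-t) - 1 + t| ≤ t ^ 2 / 2 := by
  have hlow : 0 ≤ exp (-t) - 1 + t := by linarith [add_one_le_exp (-t)]
  -- `exp t ≥ 1 + t + t²/2` and `(1 + t + t²/2)(1 - t + t²/2) = 1 + t⁴/4 ≥ 1`
  have hup : exp (-t) ≤ 1 - t + t ^ 2 / 2 := by
    rw [exp_neg, inv_le_iff_one_le_mul₀ (exp_pos t)]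
    nlinarith [quadratic_le_exp_of_nonneg ht, pow_nonneg ht 4, sq_nonneg (t - 1)]
  rw [abs_of_nonneg hlow]
  linarith

lemma continuousOn_integral_exp_neg_mul_sub_one_add {ν : Measure ℝ}
    (hν : ∫⁻ x in Ioi (0:ℝ), ENNReal.ofReal (min 1 (x ^ 2)) ∂ν < ⊤) :
    ContinuousOn (fun u => ∫ x in Ioi (0:ℝ),
      (exp (-(u * x)) - 1 + (if x < 1 then u * x else 0)) ∂ν) (Ioi 0) := by
  have hint : IntegrableOn (fun x => min 1 (x ^ 2)) (Ioi 0) ν :=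
    ⟨(by fun_prop : Continuous fun x : ℝ => min 1 (x ^ 2)).aestronglyMeasurable,
      (hasFiniteIntegral_iff_ofReal (Eventually.of_forall fun x =>
        le_min zero_le_one (sq_nonneg x))).2 hν⟩
  intro u₀ hu₀
  refine (continuousAt_of_dominated (bound := fun x => (1 + (u₀ + 1) ^ 2) * min 1 (x ^ 2))
    (Eventually.of_forall fun u => ?_) ?_ (hint.const_mul _) (Eventually.of_forall fun x => ?_)
    ).continuousWithinAt
  · exact (by fun_prop : Continuous fun x => exp (-(u * x)) - 1).aestronglyMeasurable.add
      (measurable_id.const_mul u |>.ite measurableSet_Iio measurable_const).aestronglyMeasurable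
  · filter_upwards [isOpen_Ioo.mem_nhds ⟨hu₀, lt_add_one u₀⟩] with u ⟨hu0, hu1⟩
    filter_upwards [ae_restrict_mem measurableSet_Ioi] with x (hx : 0 < x)
    have hux : 0 ≤ u * x := by positivity
    split_ifs with hx1
    · calc ‖exp (-(u * x)) - 1 + u * x‖ ≤ (u * x) ^ 2 / 2 := abs_exp_neg_sub_one_add_le hux
        _ ≤ (1 + (u₀ + 1) ^ 2) * x ^ 2 := by
          have : u ^ 2 ≤ (u₀ + 1) ^ 2 := by nlinarith
          nlinarith [sq_nonneg x]
        _ = (1 + (u₀ + 1) ^ 2) * min 1 (x ^ 2) := by rw [min_eq_right (by nlinarith)]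
    · have : exp (-(u * x)) ≤ 1 := exp_le_one_iff.2 (by linarith)
      rw [min_eq_left (by nlinarith), Real.norm_eq_abs, abs_le]
      constructor <;> nlinarith [exp_pos (-(u * x))]
  · split_ifs <;> fun_prop

section Primitive

variable {f : ℝ → ℝ} {a b z : ℝ}

lemma intervalIntegrable_of_continuousOn_Ioi (hf : ContinuousOn f (Ioi 0))
    (ha : 0 < a) (hb : 0 < b) : IntervalIntegrable f volume a b :=
  (hf.mono fun _ ht => (lt_min ha hb).trans_le ht.1).intervalIntegrable

lemma intervalIntegrable_zero_of_continuousOn_Ioi (hf : ContinuousOn f (Ioi 0))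
    (h : IntervalIntegrable f volume 0 1) (hz : 0 ≤ z) : IntervalIntegrable f volume 0 z := by
  rcases hz.eq_or_lt with rfl | hz
  · exact IntervalIntegrable.refl
  · exact h.trans (intervalIntegrable_of_continuousOn_Ioi hf one_pos hz)

lemma integral_zero_eq_zero_of_not_intervalIntegrable (hf : ContinuousOn f (Ioi 0))
    (h : ¬ IntervalIntegrable f volume 0 1) (hz : 0 ≤ z) : ∫ t in (0:ℝ)..z, f t = 0 := by
  rcases hz.eq_or_lt with rfl | hz
  · exact intervalIntegral.integral_same
  · exact intervalIntegral.integral_undef fun h' =>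
      h (h'.trans (intervalIntegrable_of_continuousOn_Ioi hf hz one_pos))

/-- If `f` is not integrable at `0`, the primitive is the junk value `0` on `[0, ∞)`, so no
integrability at `0` needs to be assumed. -/
lemma continuousOn_primitive_of_continuousOn_Ioi (hf : ContinuousOn f (Ioi 0)) :
    ContinuousOn (fun z => ∫ t in (0:ℝ)..z, f t) (Ici 0) := by
  by_cases h : IntervalIntegrable f volume 0 1
  · intro z (hz : 0 ≤ z)
    have hIcc : uIcc 0 (z + 1) = Icc 0 (z + 1) := uIcc_of_le (by linarith)
    refine ((intervalIntegral.continuousOn_primitive_interval'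
      (intervalIntegrable_zero_of_continuousOn_Ioi hf h (by linarith : (0:ℝ) ≤ z + 1))
      left_mem_uIcc) z ?_).mono_of_mem_nhdsWithin ?_
    · rw [hIcc]; exact ⟨hz, by linarith⟩
    · rw [hIcc, ← Ici_inter_Iic]
      exact inter_mem_nhdsWithin _ (Iic_mem_nhds (by linarith))
  · exact continuousOn_const.congr fun z hz =>
      integral_zero_eq_zero_of_not_intervalIntegrable hf h hz

lemma monotoneOn_primitive_of_continuousOn_Ioi (hf : ContinuousOn f (Ioi 0)) (ha : 0 ≤ a)
    (hnn : ∀ t, a < t → 0 ≤ f t) : MonotoneOn (fun z => ∫ t in (0:ℝ)..z, f t) (Ici a) := by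
  intro z₁ (hz₁ : a ≤ z₁) z₂ (hz₂ : a ≤ z₂) hle
  by_cases h : IntervalIntegrable f volume 0 1
  · have hint := fun z (hz : a ≤ z) =>
      intervalIntegrable_zero_of_continuousOn_Ioi hf h (ha.trans hz)
    rw [← sub_nonneg, intervalIntegral.integral_interval_sub_left (hint z₂ hz₂) (hint z₁ hz₁),
      intervalIntegral.integral_of_le hle]
    exact setIntegral_nonneg measurableSet_Ioc fun t ht => hnn t (hz₁.trans_lt ht.1)
  · simp only [integral_zero_eq_zero_of_not_intervalIntegrable hf h (ha.trans hz₁),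
      integral_zero_eq_zero_of_not_intervalIntegrable hf h (ha.trans hz₂), le_refl]

lemma intervalIntegrable_of_continuousOn_Ici (hf : ContinuousOn f (Ici 0))
    (ha : 0 ≤ a) (hb : 0 ≤ b) : IntervalIntegrable f volume a b :=
  (hf.mono fun _ ht => (le_min ha hb).trans ht.1).intervalIntegrable

end Primitive

lemma eventually_atTop_of_forall_Ioi_diff {P : ℝ → Prop} {K : Set ℝ} (hK : IsCompact K)
    (hP : ∀ z ∈ Ioi (0:ℝ) \ K, P z) : ∀ᶠ z in atTop, P z := by
  filter_upwards [atTop_le_cocompact hK.compl_mem_cocompact, eventually_gt_atTop 0]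
    with z hz hz0 using hP z ⟨hz0, hz⟩

section LaplaceMoment

lemma integrableOn_pow_mul_exp_neg_mul (j : ℕ) {b : ℝ} (hb : 0 < b) :
    IntegrableOn (fun z => z ^ j * exp (-(b * z))) (Ioi 0) := by
  refine (integrableOn_rpow_mul_exp_neg_mul_rpow (s := j) (p := 1)
    (by linarith [j.cast_nonneg (α := ℝ)]) one_pos hb).congr_fun (fun z _ => ?_) measurableSet_Ioi
  simp [rpow_natCast]

noncomputable def laplaceMoment (Φ : ℝ → ℝ) (k : ℕ) (x : ℝ) : ℝ :=
  ∫ z in Ioi 0, z ^ k * (exp (-(x * z)) * Φ z)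

def HasLaplaceMoments (Φ : ℝ → ℝ) : Prop :=
  ∀ x, 0 < x → ∀ k : ℕ, IntegrableOn (fun z => z ^ k * (exp (-(x * z)) * Φ z)) (Ioi 0)

variable {Φ : ℝ → ℝ}

lemma hasLaplaceMoments_of_norm_le {C : ℝ} {n : ℕ}
    (hΦm : AEStronglyMeasurable Φ (volume.restrict (Ioi 0)))
    (hΦ : ∀ z, 0 < z → ‖Φ z‖ ≤ C * (1 + z ^ n)) : HasLaplaceMoments Φ := by
  intro x hx k
  refine Integrable.mono' (((integrableOn_pow_mul_exp_neg_mul k hx).add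
      (integrableOn_pow_mul_exp_neg_mul (k + n) hx)).const_mul C)
    ((by fun_prop : Continuous fun z => z ^ k * exp (-(x * z))).aestronglyMeasurable.mul hΦm
      |>.congr (Eventually.of_forall fun z => mul_assoc _ _ _)) ?_
  filter_upwards [ae_restrict_mem measurableSet_Ioi] with z (hz : 0 < z)
  rw [norm_mul, norm_mul, norm_of_nonneg (pow_nonneg hz.le k), norm_of_nonneg (exp_pos _).le]
  calc z ^ k * (exp (-(x * z)) * ‖Φ z‖) ≤ z ^ k * (exp (-(x * z)) * (C * (1 + z ^ n))) := by
        gcongr; exact hΦ z hz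
    _ = C * (z ^ k * exp (-(x * z)) + z ^ (k + n) * exp (-(x * z))) := by ring

lemma laplaceMoment_nonneg (hΦ : ∀ z, 0 < z → 0 ≤ Φ z) (k : ℕ) (x : ℝ) :
    0 ≤ laplaceMoment Φ k x :=
  setIntegral_nonneg measurableSet_Ioi fun z (hz : 0 < z) =>
    mul_nonneg (pow_nonneg hz.le k) (mul_nonneg (exp_pos _).le (hΦ z hz))

lemma hasDerivAt_laplaceMoment (hint : HasLaplaceMoments Φ) (k : ℕ) {x : ℝ} (hx : 0 < x) :
    HasDerivAt (laplaceMoment Φ k) (-laplaceMoment Φ (k + 1) x) x := by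
  have hball : Metric.ball x (x / 2) ⊆ Ioi (x / 2) := fun x' hx' => by
    rw [Metric.mem_ball, Real.dist_eq, abs_lt] at hx'
    exact show x / 2 < x' by linarith
  have key := hasDerivAt_integral_of_dominated_loc_of_deriv_le (μ := volume.restrict (Ioi 0))
    (F' := fun x' z => -(z ^ (k + 1) * (exp (-(x' * z)) * Φ z)))
    (bound := fun z => ‖z ^ (k + 1) * (exp (-(x / 2 * z)) * Φ z)‖)
    (Metric.ball_mem_nhds x (half_pos hx))
    ((eventually_gt_nhds hx).mono fun x' hx' => (hint x' hx' k).aestronglyMeasurable)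
    (hint x hx k) (hint x hx (k + 1)).aestronglyMeasurable.neg ?_
    (hint (x / 2) (half_pos hx) (k + 1)).norm ?_
  · unfold laplaceMoment
    rw [← integral_neg]
    exact key.2
  · filter_upwards [ae_restrict_mem measurableSet_Ioi] with z (hz : 0 < z) x' hx'
    have hx'' : x / 2 < x' := hball hx'
    rw [norm_neg, norm_mul, norm_mul, norm_mul, norm_mul]
    gcongr
    rw [norm_of_nonneg (exp_pos _).le, norm_of_nonneg (exp_pos _).le]
    exact exp_le_exp.2 (by nlinarith)
  · filter_upwards [ae_restrict_mem measurableSet_Ioi] with z (hz : 0 < z) x' _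
    have hlin : HasDerivAt (fun w => -(w * z)) (-z) x' := (hasDerivAt_mul_const z).fun_neg
    exact ((hlin.exp.mul_const (Φ z)).const_mul (z ^ k)).congr_deriv (by ring)

lemma contDiffOn_laplaceMoment (hint : HasLaplaceMoments Φ) (n k : ℕ) :
    ContDiffOn ℝ n (laplaceMoment Φ k) (Ioi 0) := by
  induction n generalizing k with
  | zero =>
    exact contDiffOn_zero.2 fun x hx =>
      (hasDerivAt_laplaceMoment hint k hx).continuousAt.continuousWithinAt
  | succ n ih =>
    rw [Nat.cast_succ, contDiffOn_succ_iff_deriv_of_isOpen isOpen_Ioi]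
    refine ⟨fun x hx =>
      (hasDerivAt_laplaceMoment hint k hx).differentiableAt.differentiableWithinAt, by simp,
      (ih (k + 1)).neg.congr fun x hx => (hasDerivAt_laplaceMoment hint k hx).deriv⟩

lemma antitoneOn_laplaceMoment (hΦ : ∀ z, 0 < z → 0 ≤ Φ z) (hint : HasLaplaceMoments Φ)
    (k : ℕ) : AntitoneOn (laplaceMoment Φ k) (Ioi 0) :=
  antitoneOn_of_hasDerivWithinAt_nonpos (convex_Ioi 0)
    (fun x hx => (hasDerivAt_laplaceMoment hint k hx).continuousAt.continuousWithinAt)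
    (fun x hx => by
      rw [interior_Ioi] at hx ⊢; exact (hasDerivAt_laplaceMoment hint k hx).hasDerivWithinAt)
    (fun x _ => neg_nonpos.2 (laplaceMoment_nonneg hΦ (k + 1) x))

end LaplaceMoment

lemma integral_comp_le_mul_log {g I y : ℝ → ℝ} {p z₀ z : ℝ} (hz₀ : 0 < z₀) (hz : z₀ ≤ z)
    (hI : ∀ u ∈ Icc z₀ z, HasDerivAt I (g u) u) (hg : ContinuousOn g (Icc z₀ z))
    (hy : ContinuousOn y (I '' Icc z₀ z)) (hle : ∀ u ∈ Icc z₀ z, g u * y (I u) ≤ p / u) :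
    ∫ v in I z₀..I z, y v ≤ p * log (z / z₀) := by
  have huIcc : uIcc z₀ z = Icc z₀ z := uIcc_of_le hz
  have hIc : ContinuousOn I (Icc z₀ z) := fun u hu => (hI u hu).continuousAt.continuousWithinAt
  rw [← intervalIntegral.integral_comp_mul_deriv' (by rwa [huIcc]) (by rwa [huIcc])
    (by rwa [huIcc]), ← integral_inv_of_pos hz₀ (hz₀.trans_le hz),
    ← intervalIntegral.integral_const_mul]
  refine intervalIntegral.integral_mono_on hz ?_ ?_ fun u hu => ?_
  · exact ((hy.comp hIc (mapsTo_image _ _)).mul hg).intervalIntegrable_of_Icc hz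
  · exact (continuousOn_const.mul (continuousOn_inv₀.mono fun u hu =>
      (hz₀.trans_le hu.1).ne')).intervalIntegrable_of_Icc hz
  · simpa only [Function.comp, mul_comm (y (I u)), div_eq_mul_inv] using hle u hu

lemma exp_mul_le_of_le_sqrt_mul {lam σ u M Y W : ℝ} (hσ : 0 < σ) (hu : 0 < u)
    (hW : σ ^ 2 * u ^ 2 / 2 ≤ W) (hY : Y ≤ √lam * (exp (-M) / √W)) :
    exp M * Y ≤ √(2 * lam) / σ / u := by
  have hσu : 0 < σ ^ 2 * u ^ 2 / 2 := by positivity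
  have hsqrt : √(σ ^ 2 * u ^ 2 / 2) = σ * u / √2 := by
    rw [sqrt_div' _ zero_le_two, sqrt_mul' _ (sq_nonneg u), sqrt_sq hσ.le, sqrt_sq hu.le]
  calc exp M * Y ≤ exp M * (√lam * (exp (-M) / √W)) := by gcongr
    _ = √lam / √W := by rw [exp_neg]; field_simp
    _ ≤ √lam / √(σ ^ 2 * u ^ 2 / 2) := by gcongr
    _ = √(2 * lam) / σ / u := by
      rw [hsqrt, sqrt_mul zero_le_two]; field_simp

section PrimitiveOfExp

variable {m I : ℝ → ℝ}

lemma continuousOn_of_eq_integral_exp (hmc : ContinuousOn m (Ici 0))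
    (hI : ∀ w, I w = ∫ u in (0:ℝ)..w, exp (m u)) : ContinuousOn I (Ici 0) := by
  rw [show I = _ from funext hI]
  exact continuousOn_primitive_of_continuousOn_Ioi
    ((continuous_exp.comp_continuousOn hmc).mono Ioi_subset_Ici_self)

lemma monotoneOn_of_eq_integral_exp (hmc : ContinuousOn m (Ici 0))
    (hI : ∀ w, I w = ∫ u in (0:ℝ)..w, exp (m u)) : MonotoneOn I (Ici 0) := by
  rw [show I = _ from funext hI]
  exact monotoneOn_primitive_of_continuousOn_Ioi
    ((continuous_exp.comp_continuousOn hmc).mono Ioi_subset_Ici_self) le_rfl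
    fun t _ => (exp_pos _).le

lemma nonneg_of_eq_integral_exp (hmc : ContinuousOn m (Ici 0))
    (hI : ∀ w, I w = ∫ u in (0:ℝ)..w, exp (m u)) {z : ℝ} (hz : 0 ≤ z) : 0 ≤ I z := by
  have h0 : I 0 = 0 := by simp [hI]
  exact h0 ▸ monotoneOn_of_eq_integral_exp hmc hI self_mem_Ici hz hz

lemma hasDerivAt_of_eq_integral_exp (hmc : ContinuousOn m (Ici 0))
    (hI : ∀ w, I w = ∫ u in (0:ℝ)..w, exp (m u)) {u : ℝ} (hu : 0 < u) :
    HasDerivAt I (exp (m u)) u := by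
  have hc : ContinuousOn (fun t => exp (m t)) (Ici 0) := continuous_exp.comp_continuousOn hmc
  rw [show I = _ from funext hI]
  exact intervalIntegral.integral_hasDerivAt_right
    (intervalIntegrable_of_continuousOn_Ici hc le_rfl hu.le)
    ((hc.mono Ioi_subset_Ici_self).stronglyMeasurableAtFilter isOpen_Ioi u hu)
    (hc.continuousAt (Ici_mem_nhds hu))

lemma exists_sub_le_of_monotoneOn_Ici {ϑ : ℝ} (hmc : ContinuousOn m (Ici 0)) (hϑ : 0 ≤ ϑ)
    (hmono : MonotoneOn m (Ici ϑ)) : ∃ L, ∀ u z, 0 ≤ u → u ≤ z → m u - m z ≤ L := by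
  obtain ⟨K, hK⟩ := isCompact_Icc.exists_bound_of_continuousOn
    (hmc.mono (Icc_subset_Ici_self : Icc 0 ϑ ⊆ Ici 0))
  have hb : ∀ t ∈ Icc 0 ϑ, -K ≤ m t ∧ m t ≤ K := fun t ht => abs_le.1 (hK t ht)
  refine ⟨2 * K, fun u z hu huz => ?_⟩
  have hK0 := hb 0 ⟨le_rfl, hϑ⟩
  rcases le_total z ϑ with hz | hz
  · linarith [hb u ⟨hu, huz.trans hz⟩, hb z ⟨hu.trans huz, hz⟩]
  · rcases le_total ϑ u with hϑu | hϑu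
    · linarith [hmono hϑu hz huz]
    · linarith [hmono self_mem_Ici hz hz, hb u ⟨hu, hϑu⟩, hb ϑ ⟨hϑ, le_rfl⟩]

lemma exp_neg_mul_le_of_sub_le (hmc : ContinuousOn m (Ici 0))
    (hI : ∀ w, I w = ∫ u in (0:ℝ)..w, exp (m u)) {L z : ℝ}
    (hL : ∀ u, 0 ≤ u → u ≤ z → m u - m z ≤ L) (hz : 0 ≤ z) :
    exp (-m z) * I z ≤ z * exp L := by
  have hle : I z ≤ z * exp (m z + L) := by
    rw [hI]
    calc ∫ u in (0:ℝ)..z, exp (m u) ≤ ∫ u in (0:ℝ)..z, exp (m z + L) :=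
          intervalIntegral.integral_mono_on hz (intervalIntegrable_of_continuousOn_Ici
            (continuous_exp.comp_continuousOn hmc) le_rfl hz) intervalIntegrable_const
            fun u hu => exp_le_exp.2 (by linarith [hL u hu.1 hu.2])
      _ = z * exp (m z + L) := by simp
  calc exp (-m z) * I z ≤ exp (-m z) * (z * exp (m z + L)) := by gcongr
    _ = z * exp L := by rw [exp_add, exp_neg]; field_simp

lemma tendsto_atTop_of_eq_integral_exp {ϑ : ℝ} (hmc : ContinuousOn m (Ici 0)) (hϑ : 0 ≤ ϑ)
    (hmono : MonotoneOn m (Ici ϑ)) (hI : ∀ w, I w = ∫ u in (0:ℝ)..w, exp (m u)) :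
    Tendsto I atTop atTop := by
  have hc : ContinuousOn (fun t => exp (m t)) (Ici 0) := continuous_exp.comp_continuousOn hmc
  refine tendsto_atTop_mono' _ ((eventually_ge_atTop ϑ).mono fun z hz => ?_)
    ((tendsto_atTop_add_const_right _ (-ϑ) tendsto_id).atTop_mul_const (exp_pos (m ϑ)))
  have hsub : I z - I ϑ = ∫ u in ϑ..z, exp (m u) := by
    rw [hI, hI, intervalIntegral.integral_interval_sub_left
      (intervalIntegrable_of_continuousOn_Ici hc le_rfl (hϑ.trans hz))
      (intervalIntegrable_of_continuousOn_Ici hc le_rfl hϑ)]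
  have hlow : ∫ u in ϑ..z, exp (m ϑ) ≤ ∫ u in ϑ..z, exp (m u) :=
    intervalIntegral.integral_mono_on hz intervalIntegrable_const
      (intervalIntegrable_of_continuousOn_Ici hc hϑ (hϑ.trans hz))
      fun u hu => exp_le_exp.2 (hmono self_mem_Ici hu.1 hu.1)
  simp only [intervalIntegral.integral_const, smul_eq_mul] at hlow
  simp only [id]
  linarith [nonneg_of_eq_integral_exp hmc hI hϑ]

end PrimitiveOfExp

section Density

variable {m I y : ℝ → ℝ}

lemma continuousOn_integral_comp (hmc : ContinuousOn m (Ici 0))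
    (hI : ∀ w, I w = ∫ u in (0:ℝ)..w, exp (m u)) (hyc : ContinuousOn y (Ioi 0)) :
    ContinuousOn (fun z => ∫ v in (0:ℝ)..I z, y v) (Ici 0) :=
  (continuousOn_primitive_of_continuousOn_Ioi hyc).comp (continuousOn_of_eq_integral_exp hmc hI)
    fun _ hz => nonneg_of_eq_integral_exp hmc hI hz

lemma continuousOn_exp_add_integral_comp (hmc : ContinuousOn m (Ici 0))
    (hI : ∀ w, I w = ∫ u in (0:ℝ)..w, exp (m u)) (hyc : ContinuousOn y (Ioi 0)) :
    ContinuousOn (fun u => exp (m u + 2 * ∫ v in (0:ℝ)..I u, y v)) (Ici 0) :=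
  continuous_exp.comp_continuousOn (hmc.add (continuousOn_const.mul
    (continuousOn_integral_comp hmc hI hyc)))

lemma monotoneOn_integral_comp (hmc : ContinuousOn m (Ici 0))
    (hI : ∀ w, I w = ∫ u in (0:ℝ)..w, exp (m u)) (hyc : ContinuousOn y (Ioi 0))
    (hy : ∀ z, 0 < z → 0 ≤ y z) : MonotoneOn (fun z => ∫ v in (0:ℝ)..I z, y v) (Ici 0) :=
  (monotoneOn_primitive_of_continuousOn_Ioi hyc le_rfl hy).comp
    (monotoneOn_of_eq_integral_exp hmc hI) fun _ hz => nonneg_of_eq_integral_exp hmc hI hz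

lemma exists_integral_comp_le_add_mul_log {ω Iinv r : ℝ → ℝ} {σ ϑ lam : ℝ} (hσ : 0 < σ)
    (hωσ : ∀ u, 0 < u → σ ^ 2 * u ^ 2 / 2 ≤ ω u)
    (hmc : ContinuousOn m (Ici 0)) (hϑ : 0 ≤ ϑ) (hmono : MonotoneOn m (Ici ϑ))
    (hI : ∀ w, I w = ∫ u in (0:ℝ)..w, exp (m u))
    (hIinv_left : ∀ x, 0 ≤ x → Iinv (I x) = x)
    (hr : ∀ z, r z = exp (-(m (Iinv z))) / √(ω (Iinv z)))
    (hyc : ContinuousOn y (Ioi 0)) (hyint : IntervalIntegrable y volume 0 1)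
    (hybound : ∀ᶠ v in atTop, y v ≤ √lam * r v) :
    ∃ z₀, 1 ≤ z₀ ∧ ∀ z, z₀ ≤ z →
      ∫ v in (0:ℝ)..I z, y v ≤ (∫ v in (0:ℝ)..I z₀, y v) + √(2 * lam) / σ * log z := by
  obtain ⟨z₀, hz₀⟩ := eventually_atTop.1 ((eventually_ge_atTop 1).and
    ((tendsto_atTop_of_eq_integral_exp hmc hϑ hmono hI).eventually
      (hybound.and (eventually_gt_atTop 0))))
  have hz₀1 : 1 ≤ z₀ := (hz₀ z₀ le_rfl).1
  have hz₀pos : 0 < z₀ := by linarith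
  refine ⟨z₀, hz₀1, fun z hzz₀ => ?_⟩
  have hyint' := fun t => intervalIntegrable_zero_of_continuousOn_Ioi hyc hyint (z := t)
  have hsubst : (∫ v in (0:ℝ)..I z, y v) - ∫ v in (0:ℝ)..I z₀, y v
      ≤ √(2 * lam) / σ * log (z / z₀) := by
    rw [intervalIntegral.integral_interval_sub_left
      (hyint' _ (nonneg_of_eq_integral_exp hmc hI (hz₀pos.le.trans hzz₀)))
      (hyint' _ (nonneg_of_eq_integral_exp hmc hI hz₀pos.le))]
    refine integral_comp_le_mul_log hz₀pos hzz₀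
      (fun u hu => hasDerivAt_of_eq_integral_exp hmc hI (hz₀pos.trans_le hu.1))
      ((continuous_exp.comp_continuousOn hmc).mono fun u hu => hz₀pos.le.trans hu.1)
      (hyc.mono ?_) fun u hu => ?_
    · rintro _ ⟨u, hu, rfl⟩
      exact (hz₀ u hu.1).2.2
    · have hu0 : 0 < u := hz₀pos.trans_le hu.1
      have hyu := (hz₀ u hu.1).2.1
      rw [hr, hIinv_left u hu0.le] at hyu
      exact exp_mul_le_of_le_sqrt_mul hσ hu0 (hωσ u hu0) hyu
  have hlog : log (z / z₀) ≤ log z := by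
    rw [log_div (by linarith) hz₀pos.ne']
    linarith [log_nonneg hz₀1]
  linarith [mul_le_mul_of_nonneg_left hlog (by positivity : 0 ≤ √(2 * lam) / σ)]

lemma exists_exp_integral_comp_le {ω Iinv r : ℝ → ℝ} {σ ϑ lam : ℝ} (hσ : 0 < σ)
    (hωσ : ∀ u, 0 < u → σ ^ 2 * u ^ 2 / 2 ≤ ω u)
    (hmc : ContinuousOn m (Ici 0)) (hϑ : 0 ≤ ϑ) (hmono : MonotoneOn m (Ici ϑ))
    (hI : ∀ w, I w = ∫ u in (0:ℝ)..w, exp (m u))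
    (hIinv_left : ∀ x, 0 ≤ x → Iinv (I x) = x)
    (hr : ∀ z, r z = exp (-(m (Iinv z))) / √(ω (Iinv z)))
    (hyc : ContinuousOn y (Ioi 0)) (hy : ∀ z, 0 < z → 0 ≤ y z)
    (hyint : IntervalIntegrable y volume 0 1) (hybound : ∀ᶠ v in atTop, y v ≤ √lam * r v) :
    ∃ E : ℝ, ∃ n : ℕ, ∀ z, 0 ≤ z → exp (∫ v in (0:ℝ)..I z, y v) ≤ E * (1 + z ^ n) := by
  obtain ⟨z₀, hz₀1, hgrowth⟩ := exists_integral_comp_le_add_mul_log hσ hωσ hmc hϑ hmono hI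
    hIinv_left hr hyc hyint hybound
  set A₀ := ∫ v in (0:ℝ)..I z₀, y v
  set n := ⌈√(2 * lam) / σ⌉₊
  refine ⟨exp A₀, n, fun z hz => ?_⟩
  rcases le_total z z₀ with hzz₀ | hzz₀
  · calc exp (∫ v in (0:ℝ)..I z, y v) ≤ exp A₀ :=
          exp_le_exp.2 (monotoneOn_integral_comp hmc hI hyc hy hz (hz.trans hzz₀) hzz₀)
      _ ≤ exp A₀ * (1 + z ^ n) :=
          le_mul_of_one_le_right (exp_pos _).le (le_add_of_nonneg_right (pow_nonneg hz n))
  have hzpos : 0 < z := by linarith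
  have hlog : √(2 * lam) / σ * log z ≤ n * log z :=
    mul_le_mul_of_nonneg_right (Nat.le_ceil _) (log_nonneg (by linarith))
  calc exp (∫ v in (0:ℝ)..I z, y v) ≤ exp (A₀ + n * log z) :=
        exp_le_exp.2 (by linarith [hgrowth z hzz₀])
    _ = exp A₀ * z ^ n := by rw [exp_add, ← log_pow, exp_log (pow_pos hzpos _)]
    _ ≤ exp A₀ * (1 + z ^ n) := by gcongr; linarith

/-- The function `Φ` of the statement. -/
noncomputable def laplaceDensity (m ω I y : ℝ → ℝ) (z : ℝ) : ℝ :=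
  (exp (-(m z)) / ω z) * exp (-(∫ v in (0:ℝ)..(I z), y v)) *
    (∫ u in (0:ℝ)..z, exp (m u + 2 * ∫ v in (0:ℝ)..(I u), y v))

variable {ω : ℝ → ℝ}

lemma laplaceDensity_nonneg {z : ℝ} (hz : 0 ≤ z) (hωz : 0 < ω z) :
    0 ≤ laplaceDensity m ω I y z :=
  mul_nonneg (mul_nonneg (div_nonneg (exp_pos _).le hωz.le) (exp_pos _).le)
    (intervalIntegral.integral_nonneg hz fun _ _ => (exp_pos _).le)

lemma continuousOn_laplaceDensity (hmc : ContinuousOn m (Ici 0))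
    (hI : ∀ w, I w = ∫ u in (0:ℝ)..w, exp (m u)) (hyc : ContinuousOn y (Ioi 0))
    (hωc : ContinuousOn ω (Ioi 0)) (hω : ∀ z, 0 < z → 0 < ω z) :
    ContinuousOn (laplaceDensity m ω I y) (Ioi 0) := by
  have hA := continuousOn_integral_comp hmc hI hyc
  have hJ := continuousOn_primitive_of_continuousOn_Ioi
    ((continuousOn_exp_add_integral_comp hmc hI hyc).mono Ioi_subset_Ici_self)
  exact ((((continuous_exp.comp_continuousOn hmc.neg).mono Ioi_subset_Ici_self).div hωc
    fun z hz => (hω z hz).ne').mul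
    ((continuous_exp.comp_continuousOn hA.neg).mono Ioi_subset_Ici_self)).mul
    (hJ.mono Ioi_subset_Ici_self)

lemma laplaceDensity_le (hmc : ContinuousOn m (Ici 0))
    (hI : ∀ w, I w = ∫ u in (0:ℝ)..w, exp (m u)) (hyc : ContinuousOn y (Ioi 0))
    (hy : ∀ z, 0 < z → 0 ≤ y z) {z : ℝ} (hz : 0 ≤ z) (hωz : 0 < ω z) :
    laplaceDensity m ω I y z ≤ exp (∫ v in (0:ℝ)..I z, y v) * (exp (-m z) * I z) / ω z := by
  have hJ : ∫ u in (0:ℝ)..z, exp (m u + 2 * ∫ v in (0:ℝ)..I u, y v)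
      ≤ I z * exp (2 * ∫ v in (0:ℝ)..I z, y v) :=
    calc ∫ u in (0:ℝ)..z, exp (m u + 2 * ∫ v in (0:ℝ)..I u, y v)
        ≤ ∫ u in (0:ℝ)..z, exp (m u) * exp (2 * ∫ v in (0:ℝ)..I z, y v) :=
          intervalIntegral.integral_mono_on hz
            (intervalIntegrable_of_continuousOn_Ici
              (continuousOn_exp_add_integral_comp hmc hI hyc) le_rfl hz)
            ((intervalIntegrable_of_continuousOn_Ici
              (continuous_exp.comp_continuousOn hmc) le_rfl hz).mul_const _)
            fun u hu => by
              rw [← exp_add]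
              exact exp_le_exp.2 (by
                linarith [monotoneOn_integral_comp hmc hI hyc hy hu.1 hz hu.2])
      _ = I z * exp (2 * ∫ v in (0:ℝ)..I z, y v) := by
          rw [intervalIntegral.integral_mul_const, ← hI]
  calc laplaceDensity m ω I y z
      ≤ exp (-m z) / ω z * exp (-∫ v in (0:ℝ)..I z, y v) *
          (I z * exp (2 * ∫ v in (0:ℝ)..I z, y v)) := by
        unfold laplaceDensity; gcongr
    _ = exp (∫ v in (0:ℝ)..I z, y v) * (exp (-m z) * I z) / ω z := by
        rw [two_mul, exp_add]
        simp only [exp_neg]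
        field_simp

lemma exists_laplaceDensity_le {Iinv r : ℝ → ℝ} {c σ ϑ lam : ℝ} (hc : 0 < c) (hσ : 0 < σ)
    (hω : ∀ z, ω z = c * z + σ ^ 2 * z ^ 2 / 2)
    (hmc : ContinuousOn m (Ici 0)) (hϑ : 0 ≤ ϑ) (hmono : MonotoneOn m (Ici ϑ))
    (hI : ∀ w, I w = ∫ u in (0:ℝ)..w, exp (m u))
    (hIinv_left : ∀ x, 0 ≤ x → Iinv (I x) = x)
    (hr : ∀ z, r z = exp (-(m (Iinv z))) / √(ω (Iinv z)))
    (hyc : ContinuousOn y (Ioi 0)) (hy : ∀ z, 0 < z → 0 ≤ y z)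
    (hyint : IntervalIntegrable y volume 0 1) (hybound : ∀ᶠ v in atTop, y v ≤ √lam * r v) :
    ∃ C : ℝ, ∃ n : ℕ, ∀ z, 0 < z → laplaceDensity m ω I y z ≤ C * (1 + z ^ n) := by
  obtain ⟨E, n, hE⟩ := exists_exp_integral_comp_le hσ
    (fun u _ => by rw [hω]; nlinarith [mul_pos hc ‹0 < u›])
    hmc hϑ hmono hI hIinv_left hr hyc hy hyint hybound
  obtain ⟨L, hL⟩ := exists_sub_le_of_monotoneOn_Ici hmc hϑ hmono
  refine ⟨E * exp L / c, n, fun z hz => ?_⟩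
  have hcz : c * z ≤ ω z := by rw [hω]; nlinarith [sq_nonneg (σ * z)]
  have hωz : 0 < ω z := (mul_pos hc hz).trans_le hcz
  calc laplaceDensity m ω I y z
      ≤ exp (∫ v in (0:ℝ)..I z, y v) * (exp (-m z) * I z) / ω z :=
        laplaceDensity_le hmc hI hyc hy hz.le hωz
    _ ≤ E * (1 + z ^ n) * (z * exp L) / (c * z) := by
        have hE0 : 0 ≤ E * (1 + z ^ n) := (exp_pos _).le.trans (hE z hz.le)
        refine div_le_div₀ (by positivity) (mul_le_mul (hE z hz.le)
          (exp_neg_mul_le_of_sub_le hmc hI (fun u hu huz => hL u z hu huz) hz.le)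
          (mul_nonneg (exp_pos _).le (nonneg_of_eq_integral_exp hmc hI hz.le)) hE0)
          (mul_pos hc hz) hcz
    _ = E * exp L / c * (1 + z ^ n) := by field_simp

end Density

theorem stmt_17_general
    (b γ c σ : ℝ) (μ : Measure ℝ)
    (hc : 0 < c) (hσ : 0 < σ)
    (hμ2 : ∫⁻ x in Ioi (0:ℝ), ENNReal.ofReal (min 1 (x ^ 2)) ∂μ < ⊤)
    (ψ ω m I Iinv r : ℝ → ℝ)
    (hψ : ∀ u, ψ u = -(b * u) + γ ^ 2 * u ^ 2 +
      ∫ x in Ioi (0:ℝ), (Real.exp (-(u * x)) - 1 + (if x < 1 then u * x else 0)) ∂μ)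
    (hgen : ∃ ϑ : ℝ, 0 ≤ ϑ ∧ ∀ z, ϑ ≤ z → 0 < ψ z)
    (hω : ∀ z, ω z = c * z + σ ^ 2 * z ^ 2 / 2)
    (hm : ∀ lam, m lam = ∫ u in (0:ℝ)..lam, ψ u / ω u)
    (hI : ∀ lam, I lam = ∫ u in (0:ℝ)..lam, Real.exp (m u))
    (hIinv_left : ∀ x, 0 ≤ x → Iinv (I x) = x)
    (hr : ∀ z, r z = Real.exp (-(m (Iinv z))) / Real.sqrt (ω (Iinv z)))
    (lam : ℝ) (hlam : 0 < lam)
    (y : ℝ → ℝ)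
    (hy : ∀ z ∈ Ioi (0:ℝ), 0 ≤ y z ∧ HasDerivAt y ((y z) ^ 2 - lam * (r z) ^ 2) z)
    (hyint : IntegrableOn y (Ioo 0 1) volume)
    (hybound : ∃ Kc : Set ℝ, IsCompact Kc ∧ Kc ⊆ Ioi 0 ∧
      ∀ z ∈ Ioi (0:ℝ) \ Kc, y z ≤ Real.sqrt lam * r z)
    (Φ h : ℝ → ℝ)
    (hΦ : ∀ z, Φ z = (Real.exp (-(m z)) / ω z) *
      Real.exp (-(∫ v in (0:ℝ)..(I z), y v)) *
      (∫ u in (0:ℝ)..z, Real.exp (m u + 2 * ∫ v in (0:ℝ)..(I u), y v)))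
    (hh : ∀ x, h x = 1 + lam * ∫ z in Ioi (0:ℝ), Real.exp (-(x * z)) * Φ z) :
    (∀ x : ℝ, 0 < x →
      IntegrableOn (fun z => Real.exp (-(x * z)) * Φ z) (Ioi 0) volume ∧
      IntegrableOn (fun z => z * (Real.exp (-(x * z)) * Φ z)) (Ioi 0) volume ∧
      IntegrableOn (fun z => z ^ 2 * (Real.exp (-(x * z)) * Φ z)) (Ioi 0) volume) ∧
    (∀ x : ℝ, 0 < x → 0 < h x) ∧
    AntitoneOn h (Ioi 0) ∧
    ContDiffOn ℝ 2 h (Ioi 0) := by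
  obtain ⟨ϑ, hϑ, hψ_pos⟩ := hgen
  have hω_pos : ∀ z, 0 < z → 0 < ω z := fun z hz => by rw [hω]; positivity
  have hωc : ContinuousOn ω (Ioi 0) := by rw [show ω = _ from funext hω]; fun_prop
  have hψω : ContinuousOn (fun u => ψ u / ω u) (Ioi 0) :=
    (((by fun_prop : Continuous fun u => -(b * u) + γ ^ 2 * u ^ 2).continuousOn.add
      (continuousOn_integral_exp_neg_mul_sub_one_add hμ2)).congr fun u _ => hψ u).div hωc
      fun z hz => (hω_pos z hz).ne'
  have hmc : ContinuousOn m (Ici 0) := funext hm ▸ continuousOn_primitive_of_continuousOn_Ioi hψω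
  have hm_mono : MonotoneOn m (Ici ϑ) := funext hm ▸ monotoneOn_primitive_of_continuousOn_Ioi hψω
    hϑ fun t ht => div_nonneg (hψ_pos t ht.le).le (hω_pos t (hϑ.trans_lt ht)).le
  have hyc : ContinuousOn y (Ioi 0) := fun z hz => (hy z hz).2.continuousAt.continuousWithinAt
  obtain ⟨Kc, hKc, -, hKb⟩ := hybound
  obtain rfl : Φ = laplaceDensity m ω I y := funext hΦ
  obtain ⟨C, n, hC⟩ := exists_laplaceDensity_le hc hσ hω hmc hϑ hm_mono hI hIinv_left hr hyc
    (fun z hz => (hy z hz).1) ((intervalIntegrable_iff_integrableOn_Ioo_of_le zero_le_one).2 hyint)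
    (eventually_atTop_of_forall_Ioi_diff hKc hKb)
  have hΦ_nn : ∀ z, 0 < z → 0 ≤ laplaceDensity m ω I y z :=
    fun z hz => laplaceDensity_nonneg hz.le (hω_pos z hz)
  have hint : HasLaplaceMoments (laplaceDensity m ω I y) := hasLaplaceMoments_of_norm_le
    ((continuousOn_laplaceDensity hmc hI hyc hωc hω_pos).aestronglyMeasurable measurableSet_Ioi)
    fun z hz => (norm_of_nonneg (hΦ_nn z hz)).trans_le (hC z hz)
  obtain rfl : h = fun x => 1 + lam * laplaceMoment (laplaceDensity m ω I y) 0 x :=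
    funext fun x => by simp [hh, laplaceMoment]
  refine ⟨fun x hx => ⟨by simpa using hint x hx 0, by simpa using hint x hx 1, hint x hx 2⟩,
    fun x _ => ?_, fun a ha b hb hab => ?_,
    contDiffOn_const.add (contDiffOn_const.mul (contDiffOn_laplaceMoment hint 2 0))⟩
  · exact add_pos_of_pos_of_nonneg one_pos (mul_nonneg hlam.le (laplaceMoment_nonneg hΦ_nn 0 x))
  · exact add_le_add_right
      (mul_le_mul_of_nonneg_left (antitoneOn_laplaceMoment hΦ_nn hint 0 ha hb hab) hlam.le) 1

/-- With y a non-negative C¹ solution of y′ = y² − λr² vanishing at ∞, integrable at 0 and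
dominated by √λ·r outside a compact set, and Φ, h as in the paper, the functions
z ↦ e^{−xz}Φ(z), z ↦ z e^{−xz}Φ(z), z ↦ z² e^{−xz}Φ(z) are integrable on (0,∞) for every
x > 0, and h(x) = 1 + λ∫_0^∞ e^{−xz}Φ(z) dz is well defined, positive, non-increasing and
C² on (0,∞). -/
theorem stmt_17
    (b γ c σ : ℝ) (μ : Measure ℝ)
    (hγ : 0 ≤ γ) (hc : 0 < c) (hσ : 0 < σ)
    (hμ0 : μ (Iic 0) = 0)
    (hμ2 : ∫⁻ x in Ioi (0:ℝ), ENNReal.ofReal (min 1 (x ^ 2)) ∂μ < ⊤)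
    (hμlog : ∫⁻ x in Ioi (1:ℝ), ENNReal.ofReal (Real.log x) ∂μ < ⊤)
    (ψ ω m I Iinv r : ℝ → ℝ)
    (hψ : ∀ u, ψ u = -(b * u) + γ ^ 2 * u ^ 2 +
      ∫ x in Ioi (0:ℝ), (Real.exp (-(u * x)) - 1 + (if x < 1 then u * x else 0)) ∂μ)
    (hgen : ∃ ϑ : ℝ, 0 ≤ ϑ ∧ ∀ z, ϑ ≤ z → 0 < ψ z)
    (hω : ∀ z, ω z = c * z + σ ^ 2 * z ^ 2 / 2)
    (hm : ∀ lam, m lam = ∫ u in (0:ℝ)..lam, ψ u / ω u)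
    (hI : ∀ lam, I lam = ∫ u in (0:ℝ)..lam, Real.exp (m u))
    (hIinv_left : ∀ x, 0 ≤ x → Iinv (I x) = x)
    (hIinv_right : ∀ z, 0 ≤ z → I (Iinv z) = z)
    (hr : ∀ z, r z = Real.exp (-(m (Iinv z))) / Real.sqrt (ω (Iinv z)))
    (lam : ℝ) (hlam : 0 < lam)
    (y : ℝ → ℝ)
    (hy : ∀ z ∈ Ioi (0:ℝ), 0 ≤ y z ∧ HasDerivAt y ((y z) ^ 2 - lam * (r z) ^ 2) z)
    (hy0 : Filter.Tendsto y Filter.atTop (nhds 0))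
    (hyint : IntegrableOn y (Ioo 0 1) volume)
    (hybound : ∃ Kc : Set ℝ, IsCompact Kc ∧ Kc ⊆ Ioi 0 ∧
      ∀ z ∈ Ioi (0:ℝ) \ Kc, y z ≤ Real.sqrt lam * r z)
    (Φ h : ℝ → ℝ)
    (hΦ : ∀ z, Φ z = (Real.exp (-(m z)) / ω z) *
      Real.exp (-(∫ v in (0:ℝ)..(I z), y v)) *
      (∫ u in (0:ℝ)..z, Real.exp (m u + 2 * ∫ v in (0:ℝ)..(I u), y v)))
    (hh : ∀ x, h x = 1 + lam * ∫ z in Ioi (0:ℝ), Real.exp (-(x * z)) * Φ z) :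
    (∀ x : ℝ, 0 < x →
      IntegrableOn (fun z => Real.exp (-(x * z)) * Φ z) (Ioi 0) volume ∧
      IntegrableOn (fun z => z * (Real.exp (-(x * z)) * Φ z)) (Ioi 0) volume ∧
      IntegrableOn (fun z => z ^ 2 * (Real.exp (-(x * z)) * Φ z)) (Ioi 0) volume) ∧
    (∀ x : ℝ, 0 < x → 0 < h x) ∧
    AntitoneOn h (Ioi 0) ∧
    ContDiffOn ℝ 2 h (Ioi 0) :=
  stmt_17_general b γ c σ μ hc hσ hμ2 ψ ω m I Iinv r hψ hgen hω hm hI hIinv_left hr lam hlam y hy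
    hyint hybound Φ h hΦ hh
end
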